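/- arXiv:2506.07342 — 11 statements merged into one kernel-verified Lean document; each statement's English description precedes it below -/
import Mathlib

section
/- There is an absolute constant n₀ such that the following holds for all n ≥ n₀. Let p ∈ (0,2], ε ∈ (0,1], c ≥ 0 and k an integer with 1 ≤ k ≤ n, and suppose a_k² ≥ (ε/log n)^c · ‖x_{-k}‖₂²/k. If j is an index such that ζ(1+ε)^{t−j} ≥ |a_k| and the level set S_j contributes (for the top-k problem), then, writing v = ζ(1+ε)^{t−j−1}, one has v² · s_j ≥ (ε/log n)^{c+4} · ‖x_{-rank(v)}‖₂². -/
open Finset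

noncomputable section

/-- `t = 1 + log_{1+ε} m`, all logarithms natural. -/
def tExp (ε m : ℝ) : ℝ := 1 + Real.log m / Real.log (1 + ε)

/-- The level set `S_j = {i : ζ(1+ε)^{t-j-1} ≤ |x_i| < ζ(1+ε)^{t-j}}`. -/
def levelSet {n : ℕ} (x : Fin n → ℤ) (ε m ζ : ℝ) (j : ℕ) : Finset (Fin n) :=
  Finset.univ.filter fun i =>
    ζ * (1 + ε) ^ (tExp ε m - (j : ℝ) - 1) ≤ |(x i : ℝ)| ∧
      |(x i : ℝ)| < ζ * (1 + ε) ^ (tExp ε m - (j : ℝ))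

/-- `rank(v)`: the number of indices with `|x_i| > v`. -/
def rankOf {n : ℕ} (x : Fin n → ℤ) (v : ℝ) : ℕ :=
  (Finset.univ.filter fun i : Fin n => v < |(x i : ℝ)|).card

/-- `Σ_{i=1}^k |a_i|^p` (paper is 1-indexed; here `a` is 0-indexed). -/
def topSum {n : ℕ} (a : Fin n → ℤ) (p : ℝ) (k : ℕ) : ℝ :=
  ∑ i ∈ Finset.univ.filter (fun i : Fin n => (i : ℕ) < k), |(a i : ℝ)| ^ p

/-- `Σ_{i=k+1}^n |a_i|^p = ‖x_{-k}‖_p^p` (paper is 1-indexed). -/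
def tailSum {n : ℕ} (a : Fin n → ℤ) (p : ℝ) (k : ℕ) : ℝ :=
  ∑ i ∈ Finset.univ.filter (fun i : Fin n => k ≤ (i : ℕ)), |(a i : ℝ)| ^ p

/-- `Σ_{i=k+1}^{n-k} |a_i|^p` (paper is 1-indexed). -/
def midSum {n : ℕ} (a : Fin n → ℤ) (p : ℝ) (k : ℕ) : ℝ :=
  ∑ i ∈ Finset.univ.filter (fun i : Fin n => k ≤ (i : ℕ) ∧ (i : ℕ) < n - k), |(a i : ℝ)| ^ p

/-- `|a_k|` for paper (1-indexed) index `k`, i.e. 0-indexed entry `k-1`. -/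
def aAbs {n : ℕ} (a : Fin n → ℤ) (k : ℕ) : ℝ :=
  if h : k - 1 < n then |(a ⟨k - 1, h⟩ : ℝ)| else 0

/-- `a` is `x` rearranged in non-increasing order of absolute value. -/
def IsRearrangement {n : ℕ} (x a : Fin n → ℤ) : Prop :=
  (∃ σ : Equiv.Perm (Fin n), ∀ i, a i = x (σ i)) ∧
    ∀ i i' : Fin n, i ≤ i' → |a i'| ≤ |a i|

/-- The level set `S_j` contributes (for the top-`k` problem with exponent `p`). -/
def ContributesTop {n : ℕ} (x a : Fin n → ℤ) (p ε m ζ : ℝ) (j k : ℕ) : Prop :=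
  ε ^ 2 / Real.log m * topSum a p k ≤ ∑ i ∈ levelSet x ε m ζ j, |(x i : ℝ)| ^ p

/-- The level set `S_j` contributes (for the trimmed-`k` problem with exponent `p`). -/
def ContributesTrim {n : ℕ} (x a : Fin n → ℤ) (p ε m ζ : ℝ) (j k : ℕ) : Prop :=
  ε ^ 2 / Real.log m * (midSum a p k + k * aAbs a k ^ p) ≤
    ∑ i ∈ levelSet x ε m ζ j, |(x i : ℝ)| ^ p

/-!
Let `v` be the lower end of `S_j`, so that `S_j` lies in `[v, (1+ε)v)` and `|a_k| ≤ (1+ε)v ≤ 2v`.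
All coordinates outside the top `rank(v)` are at most `v`, so the part of `‖x_{-rank(v)}‖₂²`
coming from the top `k` coordinates is at most `v^{2-p} Σ_{i≤k} |a_i|^p`, while the heaviness
of `a_k` bounds the rest, `‖x_{-k}‖₂²`, by
`(log n/ε)^c k a_k² ≤ 4 (log n/ε)^c v^{2-p} Σ_{i≤k} |a_i|^p`.
Since `S_j` contributes, `Σ_{i≤k} |a_i|^p ≤ 4 (log m/ε²) v^p s_j`. Altogether
`(ε/log n)^{c+4} ‖x_{-rank(v)}‖₂² ≤ 20 ε² log m / log⁴ n · v² s_j`, and the factor is at most `1`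
as soon as `log n ≥ 3`.
-/

lemma rpow_le_rpow_sub_mul_rpow {y v p q : ℝ} (hy : 0 ≤ y) (hyv : y ≤ v) (hp : 0 ≤ p)
    (hpq : p ≤ q) : y ^ q ≤ v ^ (q - p) * y ^ p := by
  calc y ^ q = y ^ (q - p) * y ^ p := by
        rw [← Real.rpow_add_of_nonneg hy (sub_nonneg.2 hpq) hp, sub_add_cancel]
    _ ≤ v ^ (q - p) * y ^ p := by gcongr

lemma rpow_le_four {b q : ℝ} (hb1 : 1 ≤ b) (hb2 : b ≤ 2) (hq : q ≤ 2) : b ^ q ≤ 4 := by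
  calc b ^ q ≤ b ^ (2 : ℝ) := Real.rpow_le_rpow_of_exponent_le hb1 hq
    _ ≤ 4 := by rw [Real.rpow_two]; nlinarith

lemma mul_one_add_rpow_eq {ε : ℝ} (hε : 0 ≤ ε) (ζ τ : ℝ) :
    ζ * (1 + ε) ^ τ = (1 + ε) * (ζ * (1 + ε) ^ (τ - 1)) := by
  conv_lhs => rw [← sub_add_cancel τ 1, Real.rpow_add_one (by positivity)]
  ring

section Rearrangement

variable {n k : ℕ} {x a : Fin n → ℤ}

lemma IsRearrangement.antitone_abs (h : IsRearrangement x a) : Antitone fun i => |(a i : ℝ)| :=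
  fun i i' hii' => by simpa only [Int.cast_abs] using (Int.cast_le (R := ℝ)).2 (h.2 i i' hii')

lemma IsRearrangement.rankOf_eq (h : IsRearrangement x a) (v : ℝ) :
    rankOf x v = #{i | v < |(a i : ℝ)|} := by
  obtain ⟨⟨σ, hσ⟩, -⟩ := h
  simp only [rankOf, hσ]
  exact card_equiv σ.symm fun i => by simp

lemma IsRearrangement.abs_le_of_rankOf_le (h : IsRearrangement x a) {v : ℝ} {i : Fin n}
    (hi : rankOf x v ≤ i) : |(a i : ℝ)| ≤ v := by
  by_contra! hv
  have hsub : ({i' | (i' : ℕ) < i + 1} : Finset (Fin n)) ⊆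
      ({i' | v < |(a i' : ℝ)|} : Finset (Fin n)) := by
    intro i' hi'
    simp only [mem_filter, mem_univ, true_and] at hi' ⊢
    exact hv.trans_le (h.antitone_abs (show i' ≤ i from Fin.le_def.2 (by omega)))
  have hcard := card_le_card hsub
  rw [Fin.card_filter_val_lt, ← h.rankOf_eq] at hcard
  have := i.isLt
  omega

lemma aAbs_nonneg (a : Fin n → ℤ) (k : ℕ) : 0 ≤ aAbs a k := by
  unfold aAbs
  split_ifs <;> simp

lemma aAbs_le_abs (ha : Antitone fun i => |(a i : ℝ)|) {i : Fin n} (hi : (i : ℕ) < k) :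
    aAbs a k ≤ |(a i : ℝ)| := by
  unfold aAbs
  split_ifs
  · exact ha (Fin.le_def.2 (Nat.le_sub_one_of_lt hi))
  · exact abs_nonneg _

lemma natCast_mul_aAbs_rpow_le_topSum (ha : Antitone fun i => |(a i : ℝ)|) (hkn : k ≤ n)
    {p : ℝ} (hp : 0 ≤ p) : k * aAbs a k ^ p ≤ topSum a p k := by
  have hle : ∀ i ∈ ({i | (i : ℕ) < k} : Finset (Fin n)), aAbs a k ^ p ≤ |(a i : ℝ)| ^ p :=
    fun i hi => Real.rpow_le_rpow (aAbs_nonneg a k) (aAbs_le_abs ha (mem_filter.1 hi).2) hp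
  have := card_nsmul_le_sum _ _ _ hle
  rwa [Fin.card_filter_val_lt, min_eq_right hkn, nsmul_eq_mul] at this

lemma tailSum_le_of_abs_le {r : ℕ} {v p : ℝ} (hv0 : 0 ≤ v)
    (hv : ∀ i : Fin n, r ≤ i → |(a i : ℝ)| ≤ v) (hp0 : 0 ≤ p) (hp2 : p ≤ 2) :
    tailSum a 2 r ≤ v ^ (2 - p) * topSum a p k + tailSum a 2 k := by
  unfold tailSum topSum
  rw [← sum_filter_add_sum_filter_not _ fun i : Fin n => (i : ℕ) < k, mul_sum]
  gcongr ?_ + ?_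
  · calc _ ≤ ∑ i ∈ (({i | r ≤ (i : ℕ)} : Finset (Fin n)).filter fun i : Fin n => (i : ℕ) < k),
          v ^ (2 - p) * |(a i : ℝ)| ^ p := by
          gcongr with i hi
          exact rpow_le_rpow_sub_mul_rpow (abs_nonneg _)
            (hv i (mem_filter.1 (mem_filter.1 hi).1).2) hp0 hp2
      _ ≤ _ := by
          refine sum_le_sum_of_subset_of_nonneg ?_ fun i _ _ => by positivity
          intro i
          simp only [mem_filter, mem_univ, true_and]
          exact And.right
  · refine sum_le_sum_of_subset_of_nonneg ?_ fun i _ _ => by positivity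
    intro i
    simp only [mem_filter, mem_univ, true_and]
    omega

lemma mul_tailSum_le_of_heavy {E v p : ℝ} (ha : Antitone fun i => |(a i : ℝ)|) (hk1 : 1 ≤ k)
    (hkn : k ≤ n) (hp0 : 0 ≤ p) (hp2 : p ≤ 2) (hv : aAbs a k ≤ 2 * v)
    (hheavy : E * (tailSum a 2 k / k) ≤ aAbs a k ^ 2) :
    E * tailSum a 2 k ≤ 4 * v ^ (2 - p) * topSum a p k := by
  set A := aAbs a k
  have hA0 : 0 ≤ A := aAbs_nonneg a k
  have hv0 : 0 ≤ v := by linarith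
  have hk0 : (0 : ℝ) < k := by exact_mod_cast hk1
  have hA2 : A ^ 2 ≤ (2 * v) ^ (2 - p) * A ^ p := by
    simpa using rpow_le_rpow_sub_mul_rpow hA0 hv hp0 hp2
  have htwo : (2 * v) ^ (2 - p) ≤ 4 * v ^ (2 - p) := by
    rw [Real.mul_rpow zero_le_two hv0]
    exact mul_le_mul_of_nonneg_right (rpow_le_four one_le_two le_rfl (by linarith))
      (by positivity)
  calc E * tailSum a 2 k = k * (E * (tailSum a 2 k / k)) := by field_simp
    _ ≤ k * ((2 * v) ^ (2 - p) * A ^ p) := mul_le_mul_of_nonneg_left (hheavy.trans hA2) hk0.le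
    _ = (2 * v) ^ (2 - p) * (k * A ^ p) := by ring
    _ ≤ 4 * v ^ (2 - p) * topSum a p k :=
        mul_le_mul htwo (natCast_mul_aAbs_rpow_le_topSum ha hkn hp0) (by positivity)
          (by positivity)

end Rearrangement

lemma sum_levelSet_rpow_le {n : ℕ} (x : Fin n → ℤ) {p ε m ζ : ℝ} (j : ℕ) (hp0 : 0 ≤ p)
    (hp2 : p ≤ 2) (hε0 : 0 ≤ ε) (hε1 : ε ≤ 1) (hζ : 0 ≤ ζ) :
    ∑ i ∈ levelSet x ε m ζ j, |(x i : ℝ)| ^ p ≤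
      4 * ((ζ * (1 + ε) ^ (tExp ε m - j - 1)) ^ p * #(levelSet x ε m ζ j)) := by
  set v := ζ * (1 + ε) ^ (tExp ε m - j - 1)
  have hv0 : 0 ≤ v := by positivity
  have hle : ∀ i ∈ levelSet x ε m ζ j, |(x i : ℝ)| ^ p ≤ 4 * v ^ p := by
    intro i hi
    have hxi := (mem_filter.1 hi).2.2
    rw [mul_one_add_rpow_eq hε0] at hxi
    calc |(x i : ℝ)| ^ p ≤ ((1 + ε) * v) ^ p := Real.rpow_le_rpow (abs_nonneg _) hxi.le hp0
      _ = (1 + ε) ^ p * v ^ p := Real.mul_rpow (by linarith) hv0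
      _ ≤ 4 * v ^ p := by gcongr; exact rpow_le_four (by linarith) (by linarith) hp2
  calc _ ≤ #(levelSet x ε m ζ j) • (4 * v ^ p) := sum_le_card_nsmul _ _ _ hle
    _ = _ := by rw [nsmul_eq_mul]; ring

theorem mul_tailSum_rankOf_le_of_contributesTop {n : ℕ} {x a : Fin n → ℤ} {p ε m ζ E : ℝ}
    {k j : ℕ} (hre : IsRearrangement x a) (hp0 : 0 < p) (hp2 : p ≤ 2) (hε0 : 0 < ε) (hε1 : ε ≤ 1)
    (hm : 1 < m) (hζ : 0 < ζ) (hk1 : 1 ≤ k) (hkn : k ≤ n) (hE0 : 0 ≤ E) (hE1 : E ≤ 1)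
    (hheavy : E * (tailSum a 2 k / k) ≤ aAbs a k ^ 2)
    (hak : aAbs a k ≤ ζ * (1 + ε) ^ (tExp ε m - j))
    (hcontrib : ContributesTop x a p ε m ζ j k) :
    E * tailSum a 2 (rankOf x (ζ * (1 + ε) ^ (tExp ε m - j - 1))) ≤
      20 * (Real.log m / ε ^ 2) *
        ((ζ * (1 + ε) ^ (tExp ε m - j - 1)) ^ 2 * #(levelSet x ε m ζ j)) := by
  set v := ζ * (1 + ε) ^ (tExp ε m - j - 1)
  set T := topSum a p k
  set s := #(levelSet x ε m ζ j)
  have hv0 : 0 < v := by positivity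
  have hlogm : 0 < Real.log m := Real.log_pos hm
  have hT0 : 0 ≤ T := sum_nonneg fun i _ => by positivity
  have hak2 : aAbs a k ≤ 2 * v := by
    rw [mul_one_add_rpow_eq hε0.le] at hak
    nlinarith
  have hT : T ≤ 4 * (Real.log m / ε ^ 2) * (v ^ p * (s : ℝ)) := by
    calc T = Real.log m / ε ^ 2 * (ε ^ 2 / Real.log m * T) := by field_simp
      _ ≤ Real.log m / ε ^ 2 * (4 * (v ^ p * s)) := by
          refine mul_le_mul_of_nonneg_left ?_ (by positivity)
          exact hcontrib.trans (sum_levelSet_rpow_le x j hp0.le hp2 hε0.le hε1 hζ.le)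
      _ = _ := by ring
  have htail := tailSum_le_of_abs_le (k := k) hv0.le (fun i hi => hre.abs_le_of_rankOf_le hi)
    hp0.le hp2
  have hhead := mul_tailSum_le_of_heavy hre.antitone_abs hk1 hkn hp0.le hp2 hak2 hheavy
  have hvT : 0 ≤ v ^ (2 - p) * T := by positivity
  have hv2 : v ^ (2 - p) * v ^ p = v ^ 2 := by
    rw [← Real.rpow_add hv0, sub_add_cancel, Real.rpow_two]
  calc E * tailSum a 2 (rankOf x v) ≤ E * (v ^ (2 - p) * T) + E * tailSum a 2 k := by
        rw [← mul_add]; exact mul_le_mul_of_nonneg_left htail hE0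
    _ ≤ 5 * (v ^ (2 - p) * T) := by linarith [mul_le_of_le_one_left hvT hE1]
    _ ≤ 5 * (v ^ (2 - p) * (4 * (Real.log m / ε ^ 2) * (v ^ p * s))) := by gcongr
    _ = 20 * (Real.log m / ε ^ 2) * ((v ^ (2 - p) * v ^ p) * s) := by ring
    _ = 20 * (Real.log m / ε ^ 2) * (v ^ 2 * s) := by rw [hv2]

/-- there is an absolute constant `n₀` such that for all `n ≥ n₀`, if
`a_k² ≥ (ε/log n)^c · ‖x_{-k}‖₂²/k`, `ζ(1+ε)^{t-j} ≥ |a_k|`, and `S_j` contributes for the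
top-`k` problem, then `v² · s_j ≥ (ε/log n)^{c+4} · ‖x_{-rank(v)}‖₂²`
where `v = ζ(1+ε)^{t-j-1}`. -/
theorem stmt_0 : ∃ n₀ : ℕ, ∀ n : ℕ, n₀ ≤ n →
    ∀ (x a : Fin n → ℤ) (p ε c m ζ : ℝ) (k j : ℕ),
    2 ≤ n → 0 < p → p ≤ 2 → 0 < ε → ε ≤ 1 → 0 ≤ c →
    1 ≤ k → k ≤ n →
    IsRearrangement x a →
    (∀ i, |(x i : ℝ)| ≤ m) → 2 ≤ m → m ≤ (n : ℝ) →
    1 / 2 ≤ ζ → ζ ≤ 1 →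
    (ε / Real.log n) ^ c * (tailSum a 2 k / k) ≤ aAbs a k ^ 2 →
    aAbs a k ≤ ζ * (1 + ε) ^ (tExp ε m - (j : ℝ)) →
    ContributesTop x a p ε m ζ j k →
    ∀ v : ℝ, v = ζ * (1 + ε) ^ (tExp ε m - (j : ℝ) - 1) →
    (ε / Real.log n) ^ (c + 4) * tailSum a 2 (rankOf x v) ≤
      v ^ 2 * ((levelSet x ε m ζ j).card : ℝ) := by
  refine ⟨27, fun n hn x a p ε c m ζ k j _ hp0 hp2 hε0 hε1 hc hk1 hkn hre _ hm2 hmn hζ _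
    hheavy hak hcontrib v hv => ?_⟩
  subst hv
  set L := Real.log n
  have hL : 3 ≤ L := by
    rw [Real.le_log_iff_exp_le (by positivity)]
    calc Real.exp 3 = Real.exp 1 ^ 3 := by rw [← Real.exp_nat_mul]; norm_num
      _ ≤ 3 ^ 3 := by gcongr; exact Real.exp_one_lt_three.le
      _ ≤ n := by exact_mod_cast hn
  have hεL : 0 < ε / L := by positivity
  have hE1 : (ε / L) ^ c ≤ 1 := Real.rpow_le_one hεL.le (by rw [div_le_one] <;> linarith) hc
  have hmain := mul_tailSum_rankOf_le_of_contributesTop hre hp0 hp2 hε0 hε1 (by linarith)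
    (by linarith) hk1 hkn (by positivity) hE1 hheavy hak hcontrib
  have hlogm : Real.log m ≤ L := Real.log_le_log (by linarith) hmn
  have hfactor : (ε / L) ^ 4 * (20 * (Real.log m / ε ^ 2)) ≤ 1 := by
    have hε2 : ε ^ 2 ≤ 1 := pow_le_one₀ hε0.le hε1
    have : 20 * (ε ^ 2 * Real.log m) ≤ L ^ 4 := by
      calc 20 * (ε ^ 2 * Real.log m) ≤ 20 * (1 * L) := by
            gcongr; exact (Real.log_pos (by linarith)).le
        _ ≤ L ^ 4 := by nlinarith [pow_le_pow_left₀ (by norm_num) hL 3]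
    rw [div_pow, div_mul_eq_mul_div, div_le_one (by positivity)]
    field_simp
    linarith
  rw [Real.rpow_add hεL, Real.rpow_ofNat, mul_comm ((ε / L) ^ c), mul_assoc]
  calc (ε / L) ^ 4 * ((ε / L) ^ c * tailSum a 2 _)
      ≤ (ε / L) ^ 4 * (20 * (Real.log m / ε ^ 2) * _) := by gcongr
    _ ≤ _ := by rw [← mul_assoc]; exact mul_le_of_le_one_left (by positivity) hfactor
end
end

section
/- Let p ∈ (0,2], ε ∈ (0,1] and k an integer with 1 ≤ k ≤ n. If j is an index such that ζ(1+ε)^{t−j} ≥ |a_k| and the level set S_j contributes (for the top-k problem), then, writing v = ζ(1+ε)^{t−j−1}, one has v² · s_j ≥ (1/16) · (ε²/log m) · a_k² · k. -/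
open Finset

noncomputable section

/-- if `ζ(1+ε)^{t-j} ≥ |a_k|` and `S_j` contributes for the top-`k` problem, then
`v² · s_j ≥ (1/16) · (ε²/log m) · a_k² · k` where `v = ζ(1+ε)^{t-j-1}`. -/
theorem stmt_1 (n : ℕ) (hn : 2 ≤ n) (x a : Fin n → ℤ) (p ε m ζ : ℝ) (k j : ℕ)
    (hp1 : 0 < p) (hp2 : p ≤ 2) (hε1 : 0 < ε) (hε2 : ε ≤ 1)
    (hk1 : 1 ≤ k) (hk2 : k ≤ n)
    (hra : IsRearrangement x a)
    (hxm : ∀ i, |(x i : ℝ)| ≤ m) (hm1 : 2 ≤ m) (hm2 : m ≤ (n : ℝ))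
    (hζ1 : 1 / 2 ≤ ζ) (hζ2 : ζ ≤ 1)
    (hak : aAbs a k ≤ ζ * (1 + ε) ^ (tExp ε m - (j : ℝ)))
    (hcon : ContributesTop x a p ε m ζ j k) :
    1 / 16 * (ε ^ 2 / Real.log m) * aAbs a k ^ 2 * k ≤
      (ζ * (1 + ε) ^ (tExp ε m - (j : ℝ) - 1)) ^ 2 * ((levelSet x ε m ζ j).card : ℝ) := by
  classical
  have hε0 : (0:ℝ) < 1 + ε := by linarith
  have hζ0 : (0:ℝ) < ζ := by linarith
  set v := ζ * (1 + ε) ^ (tExp ε m - (j : ℝ) - 1) with hv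
  set u := ζ * (1 + ε) ^ (tExp ε m - (j : ℝ)) with hu
  set A := aAbs a k with hA
  set s : ℝ := ((levelSet x ε m ζ j).card : ℝ) with hs
  have hv0 : 0 < v := mul_pos hζ0 (Real.rpow_pos_of_pos hε0 _)
  have hu0 : 0 < u := mul_pos hζ0 (Real.rpow_pos_of_pos hε0 _)
  have hlog : 0 < Real.log m := Real.log_pos (by linarith)
  have hc : 0 < ε ^ 2 / Real.log m := by positivity
  have hs0 : 0 ≤ s := by positivity
  have huv : u = (1 + ε) * v := by
    rw [hu, hv, show tExp ε m - (j:ℝ) = (tExp ε m - (j:ℝ) - 1) + 1 by ring,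
      Real.rpow_add hε0, Real.rpow_one]; ring
  have hu2v : u ≤ 2 * v := by rw [huv]; nlinarith
  have hkn : k - 1 < n := by omega
  have hAdef : A = |(a ⟨k-1, hkn⟩ : ℝ)| := by rw [hA, aAbs, dif_pos hkn]
  have hA0 : 0 ≤ A := by rw [hAdef]; positivity
  -- sum over level set is at most card * u^p
  have hsum_le : ∑ i ∈ levelSet x ε m ζ j, |(x i : ℝ)| ^ p ≤ s * u ^ p := by
    rw [hs, ← nsmul_eq_mul]
    refine Finset.sum_le_card_nsmul _ _ _ ?_
    intro i hi
    rw [levelSet, Finset.mem_filter] at hi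
    exact Real.rpow_le_rpow (abs_nonneg _) hi.2.2.le hp1.le
  -- topSum is at least k * A^p
  have htop : (k:ℝ) * A ^ p ≤ topSum a p k := by
    have hcard : (Finset.univ.filter fun i : Fin n => (i:ℕ) < k).card = k := by
      have heq : (Finset.univ.filter fun i : Fin n => (i:ℕ) < k)
          = Finset.map (Fin.castLEEmb hk2) Finset.univ := by
        ext i
        simp only [Finset.mem_filter, Finset.mem_univ, true_and, Finset.mem_map,
          Fin.castLEEmb_apply]
        constructor
        · intro h; exact ⟨⟨i, h⟩, by simp [Fin.ext_iff]⟩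
        · rintro ⟨b, rfl⟩; exact b.isLt
      rw [heq]; simp
    have key := Finset.card_nsmul_le_sum
      (Finset.univ.filter fun i : Fin n => (i:ℕ) < k)
      (fun i => |(a i : ℝ)| ^ p) (A ^ p) ?_
    · rw [hcard, nsmul_eq_mul] at key
      exact key
    intro i hi
    rw [Finset.mem_filter] at hi
    have hik : (i:ℕ) < k := hi.2
    have hile : i ≤ (⟨k-1, hkn⟩ : Fin n) := by
      rw [Fin.le_def]; simp only []; omega
    have habs : |a ⟨k-1, hkn⟩| ≤ |a i| := hra.2 i ⟨k-1, hkn⟩ hile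
    have habsR : A ≤ |(a i : ℝ)| := by
      rw [hAdef]
      have hc2 : ((|a ⟨k-1, hkn⟩| : ℤ) : ℝ) ≤ ((|a i| : ℤ) : ℝ) := Int.cast_le.mpr habs
      push_cast at hc2
      exact hc2
    exact Real.rpow_le_rpow hA0 habsR hp1.le
  -- combine contribution
  have hcon' : ε ^ 2 / Real.log m * topSum a p k
      ≤ ∑ i ∈ levelSet x ε m ζ j, |(x i : ℝ)| ^ p := hcon
  have h1 : (ε ^ 2 / Real.log m) * ((k:ℝ) * A ^ p) ≤ s * u ^ p :=
    le_trans (mul_le_mul_of_nonneg_left htop hc.le) (le_trans hcon' hsum_le)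
  rcases eq_or_lt_of_le hA0 with hA0' | hApos
  · rw [← hA0']
    have h0 : (0:ℝ) ≤ v ^ 2 * s := by positivity
    norm_num
    linarith
  -- A > 0 case
  have hA2v : A ≤ 2 * v := le_trans hak hu2v
  have hP : A ^ 2 = A ^ p * A ^ (2 - p) := by
    rw [← Real.rpow_natCast A 2, ← Real.rpow_add hApos]
    norm_num
  have h2 : A ^ (2 - p) ≤ (2 * v) ^ (2 - p) :=
    Real.rpow_le_rpow hA0 hA2v (by linarith)
  have h3 : u ^ p ≤ (2 * v) ^ p :=
    Real.rpow_le_rpow hu0.le hu2v hp1.le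
  have h4 : (2 * v) ^ p * (2 * v) ^ (2 - p) = 4 * v ^ 2 := by
    rw [← Real.rpow_add (by linarith), show p + (2 - p) = (2:ℝ) by ring,
      show ((2:ℝ)) = ((2:ℕ):ℝ) by norm_num, Real.rpow_natCast]
    ring
  have hPp : 0 ≤ A ^ p := Real.rpow_nonneg hA0 p
  have hQ0 : 0 ≤ A ^ (2 - p) := Real.rpow_nonneg hA0 _
  have hU0 : 0 ≤ u ^ p := Real.rpow_nonneg hu0.le p
  have hW0 : 0 ≤ (2 * v) ^ (2 - p) := Real.rpow_nonneg (by linarith) _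
  have hV0 : 0 ≤ (2 * v) ^ p := Real.rpow_nonneg (by linarith) p
  have step1 : (ε ^ 2 / Real.log m) * ((k:ℝ) * (A ^ p * A ^ (2 - p)))
      ≤ s * u ^ p * (2 * v) ^ (2 - p) := by
    calc (ε ^ 2 / Real.log m) * ((k:ℝ) * (A ^ p * A ^ (2 - p)))
        = ((ε ^ 2 / Real.log m) * ((k:ℝ) * A ^ p)) * A ^ (2 - p) := by ring
      _ ≤ (s * u ^ p) * A ^ (2 - p) := by
          apply mul_le_mul_of_nonneg_right h1 hQ0
      _ ≤ (s * u ^ p) * (2 * v) ^ (2 - p) := by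
          apply mul_le_mul_of_nonneg_left h2 (by positivity)
  have step2 : s * u ^ p * (2 * v) ^ (2 - p) ≤ s * (4 * v ^ 2) := by
    rw [← h4]
    calc s * u ^ p * (2 * v) ^ (2 - p)
        ≤ s * (2 * v) ^ p * (2 * v) ^ (2 - p) := by
          apply mul_le_mul_of_nonneg_right (mul_le_mul_of_nonneg_left h3 hs0) hW0
      _ = s * ((2 * v) ^ p * (2 * v) ^ (2 - p)) := by ring
  calc 1 / 16 * (ε ^ 2 / Real.log m) * A ^ 2 * (k:ℝ)
      = 1 / 16 * ((ε ^ 2 / Real.log m) * ((k:ℝ) * (A ^ p * A ^ (2 - p)))) := by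
        rw [hP]; ring
    _ ≤ 1 / 16 * (s * (4 * v ^ 2)) := by linarith [le_trans step1 step2]
    _ ≤ v ^ 2 * s := by linarith [mul_nonneg (sq_nonneg v) hs0]
end
end

section
/- Let p ∈ (0,2], ε ∈ (0,1] and k an integer with 1 ≤ k ≤ n, and suppose the level set S_j contributes (for the top-k problem). Write v = ζ(1+ε)^{t−j−1}. Then for every integer w ≥ 0, the number of indices i ∈ {1,…,k} with v/2^{w+1} ≤ |a_i| < v/2^w is at most 16 · (log m/ε²) · s_j · 2^{wp}. -/
open Finset

noncomputable section

/-- if `S_j` contributes for the top-`k` problem, then for every `w ≥ 0` the number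
of indices `i ∈ {1,…,k}` (paper 1-indexed) with `v/2^{w+1} ≤ |a_i| < v/2^w` is at most
`16 · (log m/ε²) · s_j · 2^{wp}`, where `v = ζ(1+ε)^{t-j-1}`. -/
theorem stmt_2 (n : ℕ) (hn : 2 ≤ n) (x a : Fin n → ℤ) (p ε m ζ : ℝ) (k j w : ℕ)
    (hp1 : 0 < p) (hp2 : p ≤ 2) (hε1 : 0 < ε) (hε2 : ε ≤ 1)
    (hk1 : 1 ≤ k) (hk2 : k ≤ n)
    (hra : IsRearrangement x a)
    (hxm : ∀ i, |(x i : ℝ)| ≤ m) (hm1 : 2 ≤ m) (hm2 : m ≤ (n : ℝ))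
    (hζ1 : 1 / 2 ≤ ζ) (hζ2 : ζ ≤ 1)
    (hcon : ContributesTop x a p ε m ζ j k) :
    ∀ v : ℝ, v = ζ * (1 + ε) ^ (tExp ε m - (j : ℝ) - 1) →
    ((Finset.univ.filter fun i : Fin n =>
        (i : ℕ) < k ∧ v / 2 ^ (w + 1) ≤ |(a i : ℝ)| ∧ |(a i : ℝ)| < v / 2 ^ w).card : ℝ) ≤
      16 * (Real.log m / ε ^ 2) * ((levelSet x ε m ζ j).card : ℝ) * 2 ^ ((w : ℝ) * p) := by
  intro v hv
  have hεp : (0:ℝ) < 1 + ε := by linarith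
  have hζ0 : (0:ℝ) < ζ := by linarith
  have hv0 : 0 < v := by rw [hv]; positivity
  have h2w : (0:ℝ) < 2 ^ (w+1) := by positivity
  have hA : (0:ℝ) < (v / 2 ^ (w+1)) ^ p := Real.rpow_pos_of_pos (by positivity) p
  have hL : 0 < Real.log m := Real.log_pos (by linarith)
  set S := levelSet x ε m ζ j with hS
  set T := (Finset.univ.filter fun i : Fin n =>
        (i : ℕ) < k ∧ v / 2 ^ (w + 1) ≤ |(a i : ℝ)| ∧ |(a i : ℝ)| < v / 2 ^ w) with hT
  have h1 : (T.card : ℝ) * (v / 2 ^ (w+1)) ^ p ≤ topSum a p k := by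
    rw [topSum]
    calc (T.card : ℝ) * (v / 2 ^ (w+1)) ^ p
        = ∑ _i ∈ T, (v / 2 ^ (w+1)) ^ p := by rw [Finset.sum_const, nsmul_eq_mul]
      _ ≤ ∑ i ∈ T, |(a i : ℝ)| ^ p := by
          refine Finset.sum_le_sum fun i hi => ?_
          rw [hT, Finset.mem_filter] at hi
          exact Real.rpow_le_rpow (by positivity) hi.2.2.1 hp1.le
      _ ≤ _ := by
          refine Finset.sum_le_sum_of_subset_of_nonneg (fun i hi => ?_)
            (fun i _ _ => Real.rpow_nonneg (abs_nonneg _) p)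
          rw [hT, Finset.mem_filter] at hi
          exact Finset.mem_filter.mpr ⟨Finset.mem_univ _, hi.2.1⟩
  have h2 : ∑ i ∈ S, |(x i : ℝ)| ^ p ≤ (S.card : ℝ) * (v * (1+ε)) ^ p := by
    have key : ζ * (1+ε) ^ (tExp ε m - (j:ℝ)) = v * (1+ε) := by
      rw [hv, show tExp ε m - (j:ℝ) = (tExp ε m - (j:ℝ) - 1) + 1 by ring,
        Real.rpow_add hεp, Real.rpow_one]; ring
    calc ∑ i ∈ S, |(x i : ℝ)| ^ p ≤ ∑ _i ∈ S, (v * (1+ε)) ^ p := by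
          refine Finset.sum_le_sum fun i hi => ?_
          rw [hS, levelSet, Finset.mem_filter] at hi
          exact Real.rpow_le_rpow (abs_nonneg _) (key ▸ hi.2.2.le) hp1.le
      _ = _ := by rw [Finset.sum_const, nsmul_eq_mul]
  have h3 : (T.card:ℝ) * (v/2^(w+1))^p ≤
      Real.log m / ε^2 * ((S.card:ℝ) * (v*(1+ε))^p) := by
    have key : ε^2/Real.log m * ((T.card:ℝ) * (v/2^(w+1))^p) ≤ (S.card:ℝ) * (v*(1+ε))^p :=
      le_trans (le_trans (mul_le_mul_of_nonneg_left h1 (by positivity)) hcon) h2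
    calc (T.card:ℝ) * (v/2^(w+1))^p
        = Real.log m / ε^2 * (ε^2/Real.log m * ((T.card:ℝ)*(v/2^(w+1))^p)) := by
          field_simp
      _ ≤ _ := mul_le_mul_of_nonneg_left key (by positivity)
  have hB : (v*(1+ε))^p ≤ (v/2^(w+1))^p * (16 * (2:ℝ) ^ ((w:ℝ)*p)) := by
    have e1 : (v*(1+ε))^p = (v/2^(w+1))^p * ((1+ε)*2^(w+1))^p := by
      rw [← Real.mul_rpow (by positivity) (by positivity)]
      congr 1; field_simp
    have e2 : ((1+ε)*(2:ℝ)^(w+1))^p ≤ ((2:ℝ)^(w+2))^p := by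
      apply Real.rpow_le_rpow (by positivity) _ hp1.le
      have : (2:ℝ)^(w+2) = 2 * 2^(w+1) := by ring
      rw [this]
      exact mul_le_mul_of_nonneg_right (by linarith) (by positivity)
    have e3 : ((2:ℝ)^(w+2))^p = (2:ℝ) ^ (((w:ℝ)+2)*p) := by
      rw [← Real.rpow_natCast 2 (w+2), ← Real.rpow_mul (by norm_num)]
      push_cast; ring_nf
    have e4 : (2:ℝ) ^ (((w:ℝ)+2)*p) = (2:ℝ) ^ ((w:ℝ)*p) * (2:ℝ) ^ (2*p) := by
      rw [← Real.rpow_add (by norm_num)]; ring_nf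
    have e5 : (2:ℝ) ^ (2*p) ≤ 16 := by
      calc (2:ℝ) ^ (2*p) ≤ (2:ℝ) ^ (4:ℝ) :=
            Real.rpow_le_rpow_of_exponent_le one_le_two (by linarith)
        _ = 16 := by
            rw [show (4:ℝ) = ((4:ℕ):ℝ) by norm_num, Real.rpow_natCast]; norm_num
    calc (v*(1+ε))^p = (v/2^(w+1))^p * ((1+ε)*2^(w+1))^p := e1
      _ ≤ (v/2^(w+1))^p * ((2:ℝ)^((w:ℝ)*p) * (2:ℝ)^(2*p)) := by
          rw [← e4, ← e3]
          exact mul_le_mul_of_nonneg_left e2 hA.le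
      _ ≤ _ := by
          rw [mul_comm (16:ℝ)]
          refine mul_le_mul_of_nonneg_left ?_ hA.le
          exact mul_le_mul_of_nonneg_left e5 (Real.rpow_nonneg (by norm_num) _)
  refine le_of_mul_le_mul_right ?_ hA
  calc (T.card:ℝ) * (v/2^(w+1))^p
      ≤ Real.log m / ε^2 * ((S.card:ℝ) * (v*(1+ε))^p) := h3
    _ ≤ Real.log m / ε^2 * ((S.card:ℝ) * ((v/2^(w+1))^p * (16 * (2:ℝ)^((w:ℝ)*p)))) := by
        refine mul_le_mul_of_nonneg_left (mul_le_mul_of_nonneg_left hB ?_) (by positivity)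
        positivity
    _ = 16 * (Real.log m / ε ^ 2) * ((S.card) : ℝ) * 2 ^ ((w : ℝ) * p) * (v/2^(w+1))^p := by
        ring
end
end

section
/- There is an absolute constant C such that the following holds. Let p ∈ (0,2], ε ∈ (0,1] and k an integer with 1 ≤ k ≤ n, suppose the level set S_j contributes (for the top-k problem), write v = ζ(1+ε)^{t−j−1}, and assume rank(v) ≤ k. Then Σ_{i=rank(v)+1}^{k} a_i² ≤ C · v² · s_j · (log² m)/ε²; equivalently, ‖x_{-k}‖₂² ≥ ‖x_{-rank(v)}‖₂² − C · v² · s_j · (log² m)/ε². -/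
open Finset

noncomputable section

/-- there is an absolute constant `C` such that if `S_j` contributes for the top-`k`
problem, `v = ζ(1+ε)^{t-j-1}` and `rank(v) ≤ k`, then
`Σ_{i=rank(v)+1}^{k} a_i² ≤ C · v² · s_j · log²m/ε²`; equivalently
`‖x_{-k}‖₂² ≥ ‖x_{-rank(v)}‖₂² − C · v² · s_j · log²m/ε²`. -/
theorem stmt_3 : ∃ C : ℝ, 0 < C ∧ ∀ (n : ℕ), 2 ≤ n →
    ∀ (x a : Fin n → ℤ) (p ε m ζ : ℝ) (k j : ℕ),
    0 < p → p ≤ 2 → 0 < ε → ε ≤ 1 → 1 ≤ k → k ≤ n →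
    IsRearrangement x a →
    (∀ i, |(x i : ℝ)| ≤ m) → 2 ≤ m → m ≤ (n : ℝ) →
    1 / 2 ≤ ζ → ζ ≤ 1 →
    ContributesTop x a p ε m ζ j k →
    ∀ v : ℝ, v = ζ * (1 + ε) ^ (tExp ε m - (j : ℝ) - 1) →
    rankOf x v ≤ k →
    (∑ i ∈ Finset.univ.filter (fun i : Fin n => rankOf x v ≤ (i : ℕ) ∧ (i : ℕ) < k),
        ((a i : ℝ)) ^ 2) ≤
      C * v ^ 2 * ((levelSet x ε m ζ j).card : ℝ) * Real.log m ^ 2 / ε ^ 2 ∧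
    tailSum a 2 (rankOf x v) -
        C * v ^ 2 * ((levelSet x ε m ζ j).card : ℝ) * Real.log m ^ 2 / ε ^ 2 ≤
      tailSum a 2 k := by
  refine ⟨8, by norm_num, ?_⟩
  intro n hn x a p ε m ζ k j hp hp2 hε hε1 hk1 hkn hre hxm hm2 hmn hζ hζ1 hcontrib v hv hrank
  obtain ⟨⟨σ, hσ⟩, hsort⟩ := hre
  have hζ0 : (0:ℝ) < ζ := by linarith
  have h1ε : (0:ℝ) < 1 + ε := by linarith
  have hv0 : 0 < v := by rw [hv]; positivity
  have hlogm : 0 < Real.log m := Real.log_pos (by linarith)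
  have hloghalf : (1:ℝ)/2 ≤ Real.log m := by
    have h2 : Real.log 2 ≤ Real.log m := Real.log_le_log (by norm_num) hm2
    have := Real.log_two_gt_d9
    linarith
  -- rank in terms of a
  have hrank_eq : rankOf x v = (univ.filter fun i : Fin n => v < |(a i : ℝ)|).card := by
    unfold rankOf
    refine Finset.card_bij (fun i _ => σ.symm i) ?_ ?_ ?_
    · intro i hi
      simp only [Finset.mem_filter, Finset.mem_univ, true_and] at hi ⊢
      rw [hσ (σ.symm i), Equiv.apply_symm_apply]; exact hi
    · intro i _ i' _ h
      exact σ.symm.injective h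
    · intro i hi
      simp only [Finset.mem_filter, Finset.mem_univ, true_and] at hi
      refine ⟨σ i, ?_, by simp⟩
      simp only [Finset.mem_filter, Finset.mem_univ, true_and]
      rw [← hσ i]; exact hi
  -- entries at index ≥ rank are ≤ v
  have hle : ∀ i : Fin n, rankOf x v ≤ (i:ℕ) → |(a i:ℝ)| ≤ v := by
    intro i hi
    by_contra h
    push_neg at h
    have hsub : Finset.Iic i ⊆ univ.filter fun i' : Fin n => v < |(a i':ℝ)| := by
      intro i' hi'
      simp only [Finset.mem_Iic] at hi'
      simp only [Finset.mem_filter, Finset.mem_univ, true_and]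
      have h2 : |a i| ≤ |a i'| := hsort i' i hi'
      have h3 : ((|a i| : ℤ):ℝ) ≤ ((|a i'| : ℤ):ℝ) := by exact_mod_cast h2
      rw [Int.cast_abs, Int.cast_abs] at h3
      linarith
    have hc := Finset.card_le_card hsub
    rw [Fin.card_Iic] at hc
    rw [hrank_eq] at hi
    omega
  -- level set upper bound
  have hlevel_mem : ∀ i ∈ levelSet x ε m ζ j, |(x i:ℝ)| ≤ (1+ε) * v := by
    intro i hi
    simp only [levelSet, Finset.mem_filter, Finset.mem_univ, true_and] at hi
    have hpow : ζ * (1+ε) ^ (tExp ε m - (j:ℝ)) = (1+ε) * v := by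
      rw [hv, show tExp ε m - (j:ℝ) = (tExp ε m - (j:ℝ) - 1) + 1 by ring,
        Real.rpow_add h1ε, Real.rpow_one]; ring
    linarith [hi.2]
  have hS : ∑ i ∈ levelSet x ε m ζ j, |(x i:ℝ)|^p ≤
      ((levelSet x ε m ζ j).card : ℝ) * ((1+ε)*v)^p := by
    rw [← nsmul_eq_mul]
    refine Finset.sum_le_card_nsmul _ _ _ ?_
    intro i hi
    exact Real.rpow_le_rpow (abs_nonneg _) (hlevel_mem i hi) hp.le
  -- contributes gives topSum bound
  have htop : topSum a p k ≤ Real.log m / ε^2 * ∑ i ∈ levelSet x ε m ζ j, |(x i:ℝ)|^p := by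
    have := mul_le_mul_of_nonneg_left hcontrib (le_of_lt (by positivity : (0:ℝ) < Real.log m / ε^2))
    calc topSum a p k = Real.log m / ε^2 * (ε^2 / Real.log m * topSum a p k) := by
          field_simp
      _ ≤ _ := this
  -- main sum bound
  set T := Finset.univ.filter (fun i : Fin n => rankOf x v ≤ (i : ℕ) ∧ (i : ℕ) < k) with hT
  have hmain : (∑ i ∈ T, ((a i : ℝ)) ^ 2) ≤
      8 * v ^ 2 * ((levelSet x ε m ζ j).card : ℝ) * Real.log m ^ 2 / ε ^ 2 := by
    have hstep1 : (∑ i ∈ T, ((a i : ℝ)) ^ 2) ≤ v^(2-p) * ∑ i ∈ T, |(a i:ℝ)|^p := by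
      rw [Finset.mul_sum]
      refine Finset.sum_le_sum ?_
      intro i hi
      simp only [hT, Finset.mem_filter, Finset.mem_univ, true_and] at hi
      have hai : |(a i:ℝ)| ≤ v := hle i hi.1
      have h0 : (0:ℝ) ≤ |(a i:ℝ)| := abs_nonneg _
      calc ((a i:ℝ))^2 = |(a i:ℝ)| ^ ((2:ℝ)) := by
            rw [show (2:ℝ) = ((2:ℕ):ℝ) by norm_num, Real.rpow_natCast, sq_abs]
        _ = |(a i:ℝ)|^p * |(a i:ℝ)|^(2-p) := by
            rw [← Real.rpow_add_of_nonneg h0 hp.le (by linarith)]; norm_num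
        _ ≤ |(a i:ℝ)|^p * v^(2-p) := by
            refine mul_le_mul_of_nonneg_left ?_ (Real.rpow_nonneg h0 _)
            exact Real.rpow_le_rpow h0 hai (by linarith)
        _ = v^(2-p) * |(a i:ℝ)|^p := by ring
    have hstep2 : ∑ i ∈ T, |(a i:ℝ)|^p ≤ topSum a p k := by
      refine Finset.sum_le_sum_of_subset_of_nonneg ?_ ?_
      · intro i hi
        simp only [hT, Finset.mem_filter, Finset.mem_univ, true_and] at hi ⊢
        exact hi.2
      · intro i _ _
        exact Real.rpow_nonneg (abs_nonneg _) _
    have hv2p : (0:ℝ) ≤ v^(2-p) := Real.rpow_nonneg hv0.le _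
    have hchain : (∑ i ∈ T, ((a i : ℝ)) ^ 2) ≤
        v^(2-p) * (Real.log m / ε^2 * (((levelSet x ε m ζ j).card : ℝ) * ((1+ε)*v)^p)) := by
      calc (∑ i ∈ T, ((a i : ℝ)) ^ 2) ≤ v^(2-p) * ∑ i ∈ T, |(a i:ℝ)|^p := hstep1
        _ ≤ v^(2-p) * topSum a p k := mul_le_mul_of_nonneg_left hstep2 hv2p
        _ ≤ v^(2-p) * (Real.log m / ε^2 * ∑ i ∈ levelSet x ε m ζ j, |(x i:ℝ)|^p) :=
            mul_le_mul_of_nonneg_left htop hv2p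
        _ ≤ _ := by
            refine mul_le_mul_of_nonneg_left ?_ hv2p
            exact mul_le_mul_of_nonneg_left hS (by positivity)
    have hvp : v^(2-p) * ((1+ε)*v)^p = (1+ε)^p * v^2 := by
      rw [Real.mul_rpow (by linarith) hv0.le,
        show v^(2-p) * ((1+ε)^p * v^p) = (1+ε)^p * (v^(2-p) * v^p) by ring,
        ← Real.rpow_add hv0, show (2-p)+p = (2:ℝ) by ring,
        show (2:ℝ) = ((2:ℕ):ℝ) by norm_num, Real.rpow_natCast]
    have hA : v^(2-p) * (Real.log m / ε^2 * (((levelSet x ε m ζ j).card : ℝ) * ((1+ε)*v)^p))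
        = (1+ε)^p * v^2 * ((levelSet x ε m ζ j).card : ℝ) * Real.log m / ε^2 := by
      rw [show v^(2-p) * (Real.log m / ε^2 * (((levelSet x ε m ζ j).card : ℝ) * ((1+ε)*v)^p))
          = (v^(2-p) * ((1+ε)*v)^p) * ((levelSet x ε m ζ j).card : ℝ) * Real.log m / ε^2 by ring,
        hvp]
    rw [hA] at hchain
    have h4 : (1+ε)^p ≤ 4 := by
      calc (1+ε)^p ≤ (2:ℝ)^p := Real.rpow_le_rpow (by linarith) (by linarith) hp.le
        _ ≤ (2:ℝ)^(2:ℝ) := Real.rpow_le_rpow_of_exponent_le (by norm_num) hp2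
        _ = 4 := by rw [show (2:ℝ) = ((2:ℕ):ℝ) by norm_num, Real.rpow_natCast]; norm_num
    have hcard : (0:ℝ) ≤ ((levelSet x ε m ζ j).card : ℝ) := Nat.cast_nonneg _
    refine hchain.trans ?_
    apply div_le_div_of_nonneg_right ?_ (by positivity)
    · nlinarith [mul_nonneg (mul_nonneg (sq_nonneg v) hcard) hlogm.le,
        mul_nonneg (Real.rpow_nonneg h1ε.le p) (mul_nonneg (mul_nonneg (sq_nonneg v) hcard) hlogm.le)]
  refine ⟨hmain, ?_⟩
  -- tail sum split
  have hsplit : (univ.filter fun i : Fin n => rankOf x v ≤ (i:ℕ)) =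
      T ∪ (univ.filter fun i : Fin n => k ≤ (i:ℕ)) := by
    ext i
    simp only [hT, Finset.mem_union, Finset.mem_filter, Finset.mem_univ, true_and]
    omega
  have hdisj : Disjoint T (univ.filter fun i : Fin n => k ≤ (i:ℕ)) := by
    rw [Finset.disjoint_left]
    intro i hi hi'
    simp only [hT, Finset.mem_filter, Finset.mem_univ, true_and] at hi hi'
    omega
  have hteq : tailSum a 2 (rankOf x v) = (∑ i ∈ T, ((a i : ℝ)) ^ 2) + tailSum a 2 k := by
    unfold tailSum
    rw [hsplit, Finset.sum_union hdisj]
    congr 1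
    refine Finset.sum_congr rfl ?_
    intro i _
    rw [show (2:ℝ) = ((2:ℕ):ℝ) by norm_num, Real.rpow_natCast, sq_abs]
  linarith
end
end

section
/- Let p ∈ (0,2], ε ∈ (0,1] and k an integer with 1 ≤ k ≤ n, and suppose the level set S_j contributes (for the top-k problem). Write v = ζ(1+ε)^{t−j−1}. Then s_j ≥ (ε²/(4·log m)) · min(rank(v), k). -/
open Finset

noncomputable section

lemma card_filter_val_lt (n c : ℕ) (hc : c ≤ n) :
    (Finset.univ.filter fun i : Fin n => (i : ℕ) < c).card = c := by
  have key : (Finset.univ.filter fun i : Fin n => (i : ℕ) < c).card = (Finset.range c).card := by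
    apply Finset.card_bij (fun (i : Fin n) (_ : i ∈ Finset.univ.filter fun i : Fin n => (i : ℕ) < c) => (i : ℕ))
    · intro i hi; simp only [Finset.mem_filter, Finset.mem_univ, true_and] at hi
      simpa using hi
    · intro i _ i' _ h; exact Fin.val_injective h
    · intro b hb
      simp only [Finset.mem_range] at hb
      exact ⟨⟨b, lt_of_lt_of_le hb hc⟩, by simp [hb], rfl⟩
  rw [key, Finset.card_range]

/-- if `S_j` contributes for the top-`k` problem, then
`s_j ≥ (ε²/(4·log m)) · min(rank(v), k)` where `v = ζ(1+ε)^{t-j-1}`. -/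
theorem stmt_6 (n : ℕ) (hn : 2 ≤ n) (x a : Fin n → ℤ) (p ε m ζ : ℝ) (k j : ℕ)
    (hp1 : 0 < p) (hp2 : p ≤ 2) (hε1 : 0 < ε) (hε2 : ε ≤ 1)
    (hk1 : 1 ≤ k) (hk2 : k ≤ n)
    (hra : IsRearrangement x a)
    (hxm : ∀ i, |(x i : ℝ)| ≤ m) (hm1 : 2 ≤ m) (hm2 : m ≤ (n : ℝ))
    (hζ1 : 1 / 2 ≤ ζ) (hζ2 : ζ ≤ 1)
    (hcon : ContributesTop x a p ε m ζ j k) :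
    ∀ v : ℝ, v = ζ * (1 + ε) ^ (tExp ε m - (j : ℝ) - 1) →
    ε ^ 2 / (4 * Real.log m) * ((min (rankOf x v) k : ℕ) : ℝ) ≤
      ((levelSet x ε m ζ j).card : ℝ) := by
  intro v hv
  have hlogm : 0 < Real.log m := Real.log_pos (by linarith)
  have hε0 : (0:ℝ) < 1 + ε := by linarith
  have hζ0 : (0:ℝ) < ζ := by linarith
  have hvpos : 0 < v := by
    rw [hv]; positivity
  obtain ⟨⟨σ, hσ⟩, hsort⟩ := hra
  set r := rankOf x v with hr
  set c := min r k with hc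
  have hcn : c ≤ n := le_trans (min_le_right _ _) hk2
  -- the filter set on a has card r
  have hcard : (Finset.univ.filter fun i : Fin n => v < |(a i : ℝ)|).card = r := by
    rw [hr, rankOf]
    apply Finset.card_bij (fun i _ => σ i)
    · intro i hi
      simp only [Finset.mem_filter, Finset.mem_univ, true_and] at *
      rw [hσ i] at hi
      exact hi
    · intro i _ i' _ h; exact σ.injective h
    · intro i hi
      simp only [Finset.mem_filter, Finset.mem_univ, true_and] at hi
      exact ⟨σ.symm i, by
        simp only [Finset.mem_filter, Finset.mem_univ, true_and]
        rw [hσ, Equiv.apply_symm_apply]; exact hi, by simp⟩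
  have hbig : ∀ i : Fin n, (i : ℕ) < r → v < |(a i : ℝ)| := by
    intro i hi
    by_contra hcontra
    push_neg at hcontra
    have hsub : (Finset.univ.filter fun i' : Fin n => v < |(a i' : ℝ)|) ⊆
        Finset.univ.filter fun i' : Fin n => (i' : ℕ) < (i : ℕ) := by
      intro i' hi'
      simp only [Finset.mem_filter, Finset.mem_univ, true_and] at *
      by_contra hlt
      push_neg at hlt
      have hle : i ≤ i' := by exact_mod_cast hlt
      have h1 : |a i'| ≤ |a i| := hsort i i' hle
      have h2 : |(a i' : ℝ)| ≤ |(a i : ℝ)| := by exact_mod_cast h1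
      linarith
    have h3 := Finset.card_le_card hsub
    rw [hcard, card_filter_val_lt n i i.2.le] at h3
    omega
  -- lower bound for topSum
  have htop : (c : ℝ) * v ^ p ≤ topSum a p k := by
    rw [topSum]
    calc (c : ℝ) * v ^ p
        = ∑ _i ∈ Finset.univ.filter (fun i : Fin n => (i : ℕ) < c), v ^ p := by
          rw [Finset.sum_const, nsmul_eq_mul, card_filter_val_lt n c hcn]
      _ ≤ ∑ i ∈ Finset.univ.filter (fun i : Fin n => (i : ℕ) < c), |(a i : ℝ)| ^ p := by
          apply Finset.sum_le_sum
          intro i hi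
          simp only [Finset.mem_filter, Finset.mem_univ, true_and] at hi
          exact Real.rpow_le_rpow hvpos.le (hbig i (lt_of_lt_of_le hi (min_le_left _ _))).le hp1.le
      _ ≤ ∑ i ∈ Finset.univ.filter (fun i : Fin n => (i : ℕ) < k), |(a i : ℝ)| ^ p := by
          apply Finset.sum_le_sum_of_subset_of_nonneg
          · intro i hi
            simp only [Finset.mem_filter, Finset.mem_univ, true_and] at *
            exact lt_of_lt_of_le hi (min_le_right _ _)
          · intro i _ _; positivity
  -- upper bound for the level-set sum
  have hup : ∑ i ∈ levelSet x ε m ζ j, |(x i : ℝ)| ^ p ≤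
      ((levelSet x ε m ζ j).card : ℝ) * (v * (1 + ε)) ^ p := by
    rw [← nsmul_eq_mul, ← Finset.sum_const]
    apply Finset.sum_le_sum
    intro i hi
    simp only [levelSet, Finset.mem_filter, Finset.mem_univ, true_and] at hi
    have hxlt : |(x i : ℝ)| < v * (1 + ε) := by
      have : ζ * (1 + ε) ^ (tExp ε m - (j : ℝ)) = v * (1 + ε) := by
        rw [hv]
        have : tExp ε m - (j : ℝ) = (tExp ε m - (j : ℝ) - 1) + 1 := by ring
        rw [this, Real.rpow_add_one (ne_of_gt hε0)]
        ring
      rw [← this]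
      exact hi.2
    exact Real.rpow_le_rpow (abs_nonneg _) hxlt.le hp1.le
  -- combine
  have hchain : ε ^ 2 / Real.log m * ((c : ℝ) * v ^ p) ≤
      ((levelSet x ε m ζ j).card : ℝ) * (v ^ p * (1 + ε) ^ p) := by
    have h1 : ε ^ 2 / Real.log m * ((c : ℝ) * v ^ p) ≤
        ε ^ 2 / Real.log m * topSum a p k := by
      apply mul_le_mul_of_nonneg_left htop
      positivity
    have h2 := hcon
    rw [ContributesTop] at h2
    have h3 : (v * (1 + ε)) ^ p = v ^ p * (1 + ε) ^ p :=
      Real.mul_rpow hvpos.le hε0.le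
    rw [h3] at hup
    linarith
  have h4 : (1 + ε) ^ p ≤ (4:ℝ) := by
    have h5 : (1 + ε) ^ p ≤ (1 + ε) ^ (2:ℝ) :=
      Real.rpow_le_rpow_of_exponent_le (by linarith) hp2
    have h6 : (1 + ε) ^ (2:ℝ) = (1 + ε) ^ (2:ℕ) := by
      rw [← Real.rpow_natCast]; norm_num
    rw [h6] at h5
    nlinarith
  have hvp : (0:ℝ) < v ^ p := Real.rpow_pos_of_pos hvpos p
  have hcard0 : (0:ℝ) ≤ ((levelSet x ε m ζ j).card : ℝ) := Nat.cast_nonneg _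
  -- divide by v^p
  have hdiv : ε ^ 2 / Real.log m * (c : ℝ) ≤
      ((levelSet x ε m ζ j).card : ℝ) * (1 + ε) ^ p := by
    have := hchain
    rw [div_mul_eq_mul_div, div_le_iff₀ hlogm] at this ⊢
    nlinarith
  have h7 : ((levelSet x ε m ζ j).card : ℝ) * (1 + ε) ^ p ≤
      ((levelSet x ε m ζ j).card : ℝ) * 4 := by
    exact mul_le_mul_of_nonneg_left h4 hcard0
  rw [div_mul_eq_mul_div, div_le_iff₀ (by positivity : (0:ℝ) < 4 * Real.log m)]
  rw [div_mul_eq_mul_div, div_le_iff₀ hlogm] at hdiv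
  nlinarith
end
end

section
/- Let p > 0, ε ∈ (0,1] and k an integer with 1 ≤ k ≤ n, and let J be the set of indices j ∈ {0,1,…,⌈t⌉−1} for which the level set S_j does not contribute (for the top-k problem). Then Σ_{j∈J} Σ_{i∈S_j} |x_i|^p ≤ 5·ε · Σ_{i=1}^k |a_i|^p. -/
open Finset

noncomputable section

open scoped Classical in
/-- the total `F_p` mass of the non-contributing level sets (top-`k` problem),
over `j ∈ {0,…,⌈t⌉−1}`, is at most `5ε · Σ_{i=1}^k |a_i|^p`. -/
theorem stmt_7 (n : ℕ) (hn : 2 ≤ n) (x a : Fin n → ℤ) (p ε m ζ : ℝ) (k : ℕ)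
    (hp : 0 < p) (hε1 : 0 < ε) (hε2 : ε ≤ 1) (hk1 : 1 ≤ k) (hk2 : k ≤ n)
    (hra : IsRearrangement x a)
    (hxm : ∀ i, |(x i : ℝ)| ≤ m) (hm1 : 2 ≤ m) (hm2 : m ≤ (n : ℝ))
    (hζ1 : 1 / 2 ≤ ζ) (hζ2 : ζ ≤ 1) :
    ∑ j ∈ (Finset.range (Nat.ceil (tExp ε m))).filter
        (fun j => ¬ ContributesTop x a p ε m ζ j k),
      ∑ i ∈ levelSet x ε m ζ j, |(x i : ℝ)| ^ p ≤ 5 * ε * topSum a p k := by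
  classical
  have hT : 0 ≤ topSum a p k :=
    Finset.sum_nonneg fun i _ => Real.rpow_nonneg (abs_nonneg _) p
  have hL0 : (0:ℝ) < Real.log m := Real.log_pos (by linarith)
  have hL2 : Real.log 2 ≤ Real.log m := Real.log_le_log (by norm_num) hm1
  have hlog2 : (0.6931471803:ℝ) < Real.log 2 := Real.log_two_gt_d9
  have hE0 : (0:ℝ) < Real.log (1+ε) := Real.log_pos (by linarith)
  have hE : ε/2 ≤ Real.log (1+ε) := by
    have h1 : Real.log (1/(1+ε)) ≤ 1/(1+ε) - 1 :=
      Real.log_le_sub_one_of_pos (by positivity)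
    rw [Real.log_div one_ne_zero (by positivity), Real.log_one] at h1
    have h2 : 1 - 1/(1+ε) ≤ Real.log (1+ε) := by linarith
    have h3 : ε/2 ≤ 1 - 1/(1+ε) := by
      rw [div_le_iff₀ (by positivity : (0:ℝ) < 2)]
      have : (1:ℝ)/(1+ε) ≤ 1 - ε/2 := by
        rw [div_le_iff₀ (by positivity : (0:ℝ) < 1+ε)]
        nlinarith
      nlinarith
    linarith
  set B : ℝ := ε ^ 2 / Real.log m * topSum a p k with hB
  have hB0 : 0 ≤ B := by positivity
  have hcard :
      ((Finset.range (Nat.ceil (tExp ε m))).filter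
        (fun j => ¬ ContributesTop x a p ε m ζ j k)).card ≤ Nat.ceil (tExp ε m) := by
    calc _ ≤ (Finset.range (Nat.ceil (tExp ε m))).card := Finset.card_filter_le _ _
    _ = _ := Finset.card_range _
  have hsum : ∑ j ∈ (Finset.range (Nat.ceil (tExp ε m))).filter
        (fun j => ¬ ContributesTop x a p ε m ζ j k),
      ∑ i ∈ levelSet x ε m ζ j, |(x i : ℝ)| ^ p ≤
      (Nat.ceil (tExp ε m) : ℝ) * B := by
    have h1 := Finset.sum_le_card_nsmul
      ((Finset.range (Nat.ceil (tExp ε m))).filter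
        (fun j => ¬ ContributesTop x a p ε m ζ j k))
      (fun j => ∑ i ∈ levelSet x ε m ζ j, |(x i : ℝ)| ^ p) B
      (by
        intro j hj
        simp only [Finset.mem_filter] at hj
        exact le_of_lt (lt_of_not_ge hj.2))
    rw [nsmul_eq_mul] at h1
    refine h1.trans (mul_le_mul_of_nonneg_right ?_ hB0)
    exact_mod_cast hcard
  have ht0 : 0 ≤ tExp ε m := by
    have : 0 ≤ Real.log m / Real.log (1+ε) := by positivity
    unfold tExp; linarith
  have hceil : (Nat.ceil (tExp ε m) : ℝ) ≤ tExp ε m + 1 :=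
    le_of_lt (Nat.ceil_lt_add_one ht0)
  have hdiv : Real.log m / Real.log (1+ε) ≤ 2 * Real.log m / ε := by
    rw [div_le_div_iff₀ hE0 hε1]
    nlinarith [hL0.le]
  have htle : (Nat.ceil (tExp ε m) : ℝ) ≤ 2 + 2 * Real.log m / ε := by
    have teq : tExp ε m = 1 + Real.log m / Real.log (1 + ε) := rfl
    linarith [hceil, hdiv, teq.le, teq.ge]
  have hkey : (Nat.ceil (tExp ε m) : ℝ) * (ε ^ 2 / Real.log m) ≤ 5 * ε := by
    have h1 : (2 + 2 * Real.log m / ε) * (ε ^ 2 / Real.log m) ≤ 5 * ε := by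
      have h2 : (2 + 2 * Real.log m / ε) * (ε ^ 2 / Real.log m)
          = 2 * ε ^ 2 / Real.log m + 2 * ε := by
        field_simp
      have h3 : 2 * ε ^ 2 / Real.log m ≤ 3 * ε := by
        rw [div_le_iff₀ hL0]
        nlinarith [hL2]
      linarith
    refine le_trans (mul_le_mul_of_nonneg_right htle (by positivity)) h1
  have heq : (Nat.ceil (tExp ε m) : ℝ) * B
      = ((Nat.ceil (tExp ε m) : ℝ) * (ε ^ 2 / Real.log m)) * topSum a p k := by
    rw [hB]; ring
  nlinarith [mul_le_mul_of_nonneg_right hkey hT, hsum, heq]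
end
end

section
/- Let p ∈ (0,2], ε ∈ (0,1] and k an integer with 1 ≤ k ≤ n/2. If the level set S_j contributes (for the trimmed-k problem) and v := ζ(1+ε)^{t−j} satisfies v ≥ |a_{n−k}|, then v² · s_j ≥ (ε²/log m) · (n−k) · a_{n−k}² ≥ (ε²/log m) · ‖x_{-(n−k)}‖₂². -/
open Finset

noncomputable section

lemma auxCardFilter (n a b : ℕ) :
    (Finset.univ.filter fun i : Fin n => a ≤ (i : ℕ) ∧ (i : ℕ) < b).card = min b n - a := by
  rw [Finset.card_filter,
    Fin.sum_univ_eq_sum_range (fun i => if a ≤ i ∧ i < b then 1 else 0), ← Finset.card_filter]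
  have h : (Finset.range n).filter (fun i => a ≤ i ∧ i < b) = Finset.Ico a (min b n) := by
    ext i; simp [Finset.mem_Ico, Finset.mem_range]; omega
  rw [h, Nat.card_Ico]

/-- if `S_j` contributes for the trimmed-`k` problem and `v = ζ(1+ε)^{t-j} ≥ |a_{n-k}|`,
then `v² · s_j ≥ (ε²/log m) · (n−k) · a_{n−k}² ≥ (ε²/log m) · ‖x_{-(n−k)}‖₂²`. -/
theorem stmt_8 (n : ℕ) (hn : 2 ≤ n) (x a : Fin n → ℤ) (p ε m ζ : ℝ) (k j : ℕ)
    (hp1 : 0 < p) (hp2 : p ≤ 2) (hε1 : 0 < ε) (hε2 : ε ≤ 1)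
    (hk1 : 1 ≤ k) (hk2 : 2 * k ≤ n)
    (hra : IsRearrangement x a)
    (hxm : ∀ i, |(x i : ℝ)| ≤ m) (hm1 : 2 ≤ m) (hm2 : m ≤ (n : ℝ))
    (hζ1 : 1 / 2 ≤ ζ) (hζ2 : ζ ≤ 1)
    (hcon : ContributesTrim x a p ε m ζ j k) :
    ∀ v : ℝ, v = ζ * (1 + ε) ^ (tExp ε m - (j : ℝ)) →
    aAbs a (n - k) ≤ v →
    ε ^ 2 / Real.log m * ((n - k : ℕ) : ℝ) * aAbs a (n - k) ^ 2 ≤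
        v ^ 2 * ((levelSet x ε m ζ j).card : ℝ) ∧
      ε ^ 2 / Real.log m * tailSum a 2 (n - k) ≤
        ε ^ 2 / Real.log m * ((n - k : ℕ) : ℝ) * aAbs a (n - k) ^ 2 := by
  intro v hv hAv
  have hlogm : 0 < Real.log m := Real.log_pos (by linarith)
  have hL0 : 0 ≤ ε ^ 2 / Real.log m := by positivity
  have hζ0 : 0 < ζ := by linarith
  have hv0 : 0 < v := by rw [hv]; positivity
  have hidx : n - k - 1 < n := by omega
  set idx : Fin n := ⟨n - k - 1, hidx⟩ with hidxdef
  have hAeq : aAbs a (n - k) = |(a idx : ℝ)| := by rw [aAbs, dif_pos hidx]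
  set A := |(a idx : ℝ)| with hAdef
  have hA0 : 0 ≤ A := abs_nonneg _
  have hAv' : A ≤ v := hAeq ▸ hAv
  have hmono : ∀ i i' : Fin n, (i : ℕ) ≤ (i' : ℕ) → |(a i' : ℝ)| ≤ |(a i : ℝ)| := by
    intro i i' h
    rw [← Int.cast_abs, ← Int.cast_abs]
    exact_mod_cast hra.2 i i' h
  -- second inequality
  have hcard2 : (Finset.univ.filter fun i : Fin n => n - k ≤ (i : ℕ)).card = k := by
    have : (Finset.univ.filter fun i : Fin n => n - k ≤ (i : ℕ))
        = Finset.univ.filter fun i : Fin n => n - k ≤ (i : ℕ) ∧ (i : ℕ) < n := by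
      apply Finset.filter_congr; intro i _; simp [i.isLt]
    rw [this, auxCardFilter]; omega
  have htail : tailSum a 2 (n - k) ≤ (k : ℝ) * A ^ 2 := by
    have hb : ∀ i ∈ Finset.univ.filter fun i : Fin n => n - k ≤ (i : ℕ),
        |(a i : ℝ)| ^ (2 : ℝ) ≤ A ^ 2 := by
      intro i hi
      rw [Finset.mem_filter] at hi
      have h1 : |(a i : ℝ)| ≤ A := hmono idx i (by simp [hidxdef]; omega)
      calc |(a i : ℝ)| ^ (2 : ℝ) = |(a i : ℝ)| ^ (2 : ℕ) := by
              rw [← Real.rpow_natCast]; norm_num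
        _ ≤ A ^ 2 := by
              apply pow_le_pow_left₀ (abs_nonneg _) h1
    calc tailSum a 2 (n - k) ≤ ∑ _i ∈ Finset.univ.filter fun i : Fin n => n - k ≤ (i : ℕ),
            A ^ 2 := Finset.sum_le_sum hb
      _ = (k : ℝ) * A ^ 2 := by rw [Finset.sum_const, hcard2]; simp [nsmul_eq_mul]
  rw [hAeq]
  constructor
  · -- first inequality
    have hcardmid : (Finset.univ.filter fun i : Fin n =>
        k ≤ (i : ℕ) ∧ (i : ℕ) < n - k).card = n - k - k := by
      rw [auxCardFilter]; omega
    have hmid : ((n - k - k : ℕ) : ℝ) * A ^ p ≤ midSum a p k := by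
      rw [midSum, ← hcardmid, ← nsmul_eq_mul, ← Finset.sum_const]
      apply Finset.sum_le_sum
      intro i hi
      rw [Finset.mem_filter] at hi
      exact Real.rpow_le_rpow hA0 (hmono i idx (by simp [hidxdef]; omega)) hp1.le
    have hAk : A ^ p ≤ aAbs a k ^ p := by
      apply Real.rpow_le_rpow hA0 _ hp1.le
      rw [aAbs, dif_pos (show k - 1 < n by omega)]
      exact hmono ⟨k - 1, by omega⟩ idx (by simp [hidxdef]; omega)
    have hsum : ∑ i ∈ levelSet x ε m ζ j, |(x i : ℝ)| ^ p
        ≤ ((levelSet x ε m ζ j).card : ℝ) * v ^ p := by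
      rw [← nsmul_eq_mul, ← Finset.sum_const]
      apply Finset.sum_le_sum
      intro i hi
      rw [levelSet, Finset.mem_filter] at hi
      exact Real.rpow_le_rpow (abs_nonneg _) (by rw [hv]; exact hi.2.2.le) hp1.le
    have hkey : ε ^ 2 / Real.log m * (((n - k : ℕ) : ℝ) * A ^ p)
        ≤ ((levelSet x ε m ζ j).card : ℝ) * v ^ p := by
      have h1 : ((n - k : ℕ) : ℝ) * A ^ p
          ≤ midSum a p k + (k : ℝ) * aAbs a k ^ p := by
        have h2 : ((n - k : ℕ) : ℝ) = ((n - k - k : ℕ) : ℝ) + (k : ℝ) := by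
          have h4 : n - k = n - k - k + k := by omega
          calc ((n - k : ℕ) : ℝ) = ((n - k - k + k : ℕ) : ℝ) := by rw [← h4]
            _ = _ := by push_cast; ring
        have h3 : (k : ℝ) * A ^ p ≤ (k : ℝ) * aAbs a k ^ p :=
          mul_le_mul_of_nonneg_left hAk (by positivity)
        rw [h2]; nlinarith [hmid, h3]
      calc ε ^ 2 / Real.log m * (((n - k : ℕ) : ℝ) * A ^ p)
          ≤ ε ^ 2 / Real.log m * (midSum a p k + (k : ℝ) * aAbs a k ^ p) :=
            mul_le_mul_of_nonneg_left h1 hL0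
        _ ≤ ∑ i ∈ levelSet x ε m ζ j, |(x i : ℝ)| ^ p := hcon
        _ ≤ _ := hsum
    rcases eq_or_lt_of_le hA0 with hA0' | hApos
    · rw [← hA0']; simp; positivity
    · have hsplit : A ^ 2 = A ^ p * A ^ (2 - p) := by
        rw [← Real.rpow_add hApos]
        rw [show p + (2 - p) = (2:ℝ) by ring, ← Real.rpow_natCast A 2]
        norm_num
      have hvsplit : v ^ p * v ^ (2 - p) = v ^ 2 := by
        rw [← Real.rpow_add hv0, show p + (2 - p) = (2:ℝ) by ring,
          ← Real.rpow_natCast v 2]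
        norm_num
      have hAv2 : A ^ (2 - p) ≤ v ^ (2 - p) :=
        Real.rpow_le_rpow hA0 hAv' (by linarith)
      calc ε ^ 2 / Real.log m * ((n - k : ℕ) : ℝ) * A ^ 2
          = ε ^ 2 / Real.log m * (((n - k : ℕ) : ℝ) * A ^ p) * A ^ (2 - p) := by
            rw [hsplit]; ring
        _ ≤ ((levelSet x ε m ζ j).card : ℝ) * v ^ p * A ^ (2 - p) :=
            mul_le_mul_of_nonneg_right hkey (Real.rpow_nonneg hA0 _)
        _ ≤ ((levelSet x ε m ζ j).card : ℝ) * v ^ p * v ^ (2 - p) :=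
            mul_le_mul_of_nonneg_left hAv2 (by positivity)
        _ = v ^ 2 * ((levelSet x ε m ζ j).card : ℝ) := by rw [mul_assoc, hvsplit]; ring
  · rw [mul_assoc]
    apply mul_le_mul_of_nonneg_left _ hL0
    calc tailSum a 2 (n - k) ≤ (k : ℝ) * A ^ 2 := htail
      _ ≤ ((n - k : ℕ) : ℝ) * A ^ 2 := by
          apply mul_le_mul_of_nonneg_right _ (by positivity)
          exact_mod_cast (show k ≤ n - k by omega)
end
end

section
/- For every real p > 2 and c ≥ 0 there is a constant n₀ (depending only on p) such that the following holds for all n ≥ n₀. Let ε ∈ (0,1] and k an integer with 1 ≤ k ≤ n, and suppose |a_k|^p ≥ (ε/log n)^c · ‖x_{-k}‖_p^p/k. If j is an index such that ζ(1+ε)^{t−j} ≥ |a_k| and the level set S_j contributes (for the top-k problem, with exponent p), then, writing v = ζ(1+ε)^{t−j−1}, one has v^p · s_j ≥ (ε/log n)^{c+4} · ‖x_{-rank(v)}‖_p^p. -/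
open Finset

noncomputable section

set_option maxHeartbeats 1000000 in
/-- for every `p > 2` there is `n₀` (depending only on `p`) such that for all
`c ≥ 0` and `n ≥ n₀`, if `|a_k|^p ≥ (ε/log n)^c · ‖x_{-k}‖_p^p/k`, `ζ(1+ε)^{t-j} ≥ |a_k|`, and
`S_j` contributes for the top-`k` problem (exponent `p`), then
`v^p · s_j ≥ (ε/log n)^{c+4} · ‖x_{-rank(v)}‖_p^p` where `v = ζ(1+ε)^{t-j-1}`. -/
theorem stmt_12 : ∀ p : ℝ, 2 < p → ∃ n₀ : ℕ, ∀ c : ℝ, 0 ≤ c → ∀ n : ℕ, n₀ ≤ n →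
    ∀ (x a : Fin n → ℤ) (ε m ζ : ℝ) (k j : ℕ),
    2 ≤ n → 0 < ε → ε ≤ 1 → 1 ≤ k → k ≤ n →
    IsRearrangement x a →
    (∀ i, |(x i : ℝ)| ≤ m) → 2 ≤ m → m ≤ (n : ℝ) →
    1 / 2 ≤ ζ → ζ ≤ 1 →
    (ε / Real.log n) ^ c * (tailSum a p k / k) ≤ aAbs a k ^ p →
    aAbs a k ≤ ζ * (1 + ε) ^ (tExp ε m - (j : ℝ)) →
    ContributesTop x a p ε m ζ j k →
    ∀ v : ℝ, v = ζ * (1 + ε) ^ (tExp ε m - (j : ℝ) - 1) →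
    (ε / Real.log n) ^ (c + 4) * tailSum a p (rankOf x v) ≤
      v ^ p * ((levelSet x ε m ζ j).card : ℝ) := by
  intro p hp
  refine ⟨max 3 ⌈Real.exp ((2:ℝ) ^ (p+1))⌉₊, ?_⟩
  intro c hc n hn x a ε m ζ k j hn2 hε0 hε1 hk1 hkn hrearr hxm hm2 hmn hζ1 hζ2 hak hakv hcontrib v hv
  obtain ⟨-, hsort⟩ := hrearr
  have hp0 : (0:ℝ) < p := by linarith
  set Ln := Real.log n with hLndef
  set Lm := Real.log m with hLmdef
  have hexp : Real.exp ((2:ℝ)^(p+1)) ≤ (n:ℝ) :=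
    Nat.ceil_le.mp (le_trans (le_max_right _ _) hn)
  have h2p : (2:ℝ)^(p+1) ≤ Ln := by
    rw [hLndef, ← Real.log_exp ((2:ℝ)^(p+1))]
    exact Real.log_le_log (Real.exp_pos _) hexp
  set P := (2:ℝ)^p with hPdef
  have hP0 : (0:ℝ) < P := Real.rpow_pos_of_pos (by norm_num) p
  have hP1 : (1:ℝ) ≤ P := by
    rw [hPdef, ← Real.rpow_zero 2]
    exact Real.rpow_le_rpow_of_exponent_le (by norm_num) hp0.le
  have h2P : 2 * P ≤ Ln := by
    have : (2:ℝ)^(p+1) = P * 2 := by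
      rw [hPdef, Real.rpow_add_one (by norm_num : (2:ℝ) ≠ 0)]
    linarith [h2p, this ▸ h2p]
  have hLn1 : (1:ℝ) ≤ Ln := by linarith
  have hLn0 : (0:ℝ) < Ln := by linarith
  have hLm0 : (0:ℝ) < Lm := Real.log_pos (by linarith)
  have hLmLn : Lm ≤ Ln := Real.log_le_log (by linarith) hmn
  have hεLn : (0:ℝ) < ε / Ln := div_pos hε0 hLn0
  set D := (ε/Ln)^c with hDdef
  set E := (ε/Ln)^(4:ℝ) with hEdef
  have hD0 : (0:ℝ) < D := Real.rpow_pos_of_pos hεLn c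
  have hE0 : (0:ℝ) < E := Real.rpow_pos_of_pos hεLn 4
  have hD1 : D ≤ 1 :=
    Real.rpow_le_one hεLn.le (by rw [div_le_one hLn0]; linarith) hc
  have hk0 : (0:ℝ) < (k:ℝ) := by exact_mod_cast hk1
  set A := aAbs a k ^ p with hAdef
  set T := topSum a p k with hTdef
  set Tl := tailSum a p k with hTldef
  set R := tailSum a p (rankOf x v) with hRdef
  set L := ∑ i ∈ levelSet x ε m ζ j, |(x i : ℝ)| ^ p with hLdef
  set s := ((levelSet x ε m ζ j).card : ℝ) with hsdef
  have hs0 : (0:ℝ) ≤ s := Nat.cast_nonneg _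
  have hζ0 : (0:ℝ) < ζ := by linarith
  have hv0 : (0:ℝ) < v := by
    rw [hv]; exact mul_pos hζ0 (Real.rpow_pos_of_pos (by linarith) _)
  have hT0 : (0:ℝ) ≤ T := Finset.sum_nonneg fun i _ => Real.rpow_nonneg (abs_nonneg _) p
  have hTl0 : (0:ℝ) ≤ Tl := Finset.sum_nonneg fun i _ => Real.rpow_nonneg (abs_nonneg _) p
  -- R ≤ T + Tl
  have hsplit : T + Tl = ∑ i : Fin n, |(a i : ℝ)| ^ p := by
    rw [hTdef, hTldef, topSum, tailSum,
      ← Finset.sum_filter_add_sum_filter_not Finset.univ (fun i : Fin n => (i:ℕ) < k)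
        (fun i => |(a i : ℝ)| ^ p)]
    congr 1
    apply Finset.sum_congr _ fun _ _ => rfl
    ext i; simp [not_lt]
  have hR_le : R ≤ T + Tl := by
    rw [hsplit, hRdef, tailSum]
    exact Finset.sum_le_sum_of_subset_of_nonneg (Finset.filter_subset _ _)
      (fun i _ _ => Real.rpow_nonneg (abs_nonneg _) p)
  -- D * Tl ≤ k * A
  have hDTl : D * Tl ≤ (k:ℝ) * A := by
    have h1 := mul_le_mul_of_nonneg_left hak hk0.le
    have h2 : (k:ℝ) * (D * (Tl / k)) = D * Tl := by
      field_simp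
    linarith [h2 ▸ h1]
  -- k * A ≤ T
  have hk1n : k - 1 < n := by omega
  have hAeq : aAbs a k = |(a ⟨k-1, hk1n⟩ : ℝ)| := by rw [aAbs, dif_pos hk1n]
  have hA0 : (0:ℝ) ≤ aAbs a k := by rw [hAeq]; exact abs_nonneg _
  have hcard : (Finset.univ.filter fun i : Fin n => (i:ℕ) < k).card = k := by
    have hset : (Finset.univ.filter fun i : Fin n => (i:ℕ) < k) =
        Finset.attachFin (Finset.range k)
          (fun m hm => lt_of_lt_of_le (Finset.mem_range.mp hm) hkn) := by
      ext i; simp [Finset.mem_attachFin]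
    rw [hset, Finset.card_attachFin, Finset.card_range]
  have hkA : (k:ℝ) * A ≤ T := by
    have hbd : ∀ i ∈ Finset.univ.filter (fun i : Fin n => (i:ℕ) < k),
        A ≤ |(a i : ℝ)| ^ p := by
      intro i hi
      simp only [Finset.mem_filter] at hi
      rw [hAdef]
      refine Real.rpow_le_rpow hA0 ?_ hp0.le
      rw [hAeq]
      have hile : i ≤ (⟨k-1, hk1n⟩ : Fin n) := by
        rw [Fin.le_def]; simp; omega
      have := hsort i ⟨k-1, hk1n⟩ hile
      have hcast : |((a ⟨k-1, hk1n⟩ : ℤ) : ℝ)| ≤ |((a i : ℤ) : ℝ)| := by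
        rw [← Int.cast_abs, ← Int.cast_abs]; exact_mod_cast this
      exact hcast
    have := Finset.card_nsmul_le_sum _ _ _ hbd
    rw [hcard, nsmul_eq_mul] at this
    exact this
  -- T ≤ Lm/ε² * L
  have hε2 : (0:ℝ) < ε^2 := by positivity
  have hTL : T ≤ Lm / ε^2 * L := by
    have h := mul_le_mul_of_nonneg_left hcontrib (le_of_lt (div_pos hLm0 hε2))
    have heq : Lm / ε^2 * (ε^2 / Lm * T) = T := by
      field_simp
    rw [heq] at h
    exact h
  -- L ≤ s * ((1+ε)*v)^p
  have hBv : ζ * (1+ε) ^ (tExp ε m - (j:ℝ)) = (1+ε) * v := by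
    rw [hv, show tExp ε m - (j:ℝ) = (tExp ε m - (j:ℝ) - 1) + 1 by ring,
      Real.rpow_add_one (by positivity : (1:ℝ)+ε ≠ 0)]
    ring
  have hLs : L ≤ s * ((1+ε)*v)^p := by
    have := Finset.sum_le_card_nsmul (levelSet x ε m ζ j) (fun i => |(x i : ℝ)| ^ p)
      (((1+ε)*v)^p) ?_
    · rw [nsmul_eq_mul] at this; exact this
    · intro i hi
      rw [levelSet, Finset.mem_filter] at hi
      refine Real.rpow_le_rpow (abs_nonneg _) ?_ hp0.le
      rw [← hBv]
      exact hi.2.2.le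
  -- numeric coefficient bound
  have hE4 : E = ε^(4:ℕ) / Ln^(4:ℕ) := by
    rw [hEdef, show ((4:ℝ)) = ((4:ℕ):ℝ) by norm_num, Real.rpow_natCast, div_pow]
  have hQP : (1+ε)^p ≤ P := Real.rpow_le_rpow (by linarith) (by linarith) hp0.le
  have hQ0 : (0:ℝ) < (1+ε)^p := Real.rpow_pos_of_pos (by linarith) p
  have hkey : 2 * ε^(4:ℕ) * Lm * (1+ε)^p ≤ ε^2 * Ln^(4:ℕ) := by
    have hε42 : ε^(4:ℕ) ≤ ε^(2:ℕ) := pow_le_pow_of_le_one hε0.le hε1 (by norm_num)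
    have step1 : 2 * ε^(4:ℕ) * Lm * (1+ε)^p ≤ 2 * ε^(2:ℕ) * Ln * P := by
      have h1 : 2 * ε^(4:ℕ) * Lm * (1+ε)^p ≤ 2 * ε^(2:ℕ) * Lm * (1+ε)^p := by
        have := mul_le_mul_of_nonneg_right (mul_le_mul_of_nonneg_right
          (mul_le_mul_of_nonneg_left hε42 (by norm_num : (0:ℝ) ≤ 2)) hLm0.le) hQ0.le
        linarith [this]
      have h2 : 2 * ε^(2:ℕ) * Lm * (1+ε)^p ≤ 2 * ε^(2:ℕ) * Ln * (1+ε)^p := by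
        have := mul_le_mul_of_nonneg_right (mul_le_mul_of_nonneg_left hLmLn
          (by positivity : (0:ℝ) ≤ 2 * ε^(2:ℕ))) hQ0.le
        linarith [this]
      have h3 : 2 * ε^(2:ℕ) * Ln * (1+ε)^p ≤ 2 * ε^(2:ℕ) * Ln * P := by
        have := mul_le_mul_of_nonneg_left hQP (by positivity : (0:ℝ) ≤ 2 * ε^(2:ℕ) * Ln)
        linarith [this]
      linarith
    have step2 : 2 * ε^(2:ℕ) * Ln * P ≤ ε^(2:ℕ) * Ln * Ln := by
      have h4 : ε^(2:ℕ) * Ln * (2*P) ≤ ε^(2:ℕ) * Ln * Ln :=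
        mul_le_mul_of_nonneg_left h2P (by positivity)
      linarith [h4]
    have step3 : ε^(2:ℕ) * Ln * Ln ≤ ε^(2:ℕ) * Ln^(4:ℕ) := by
      have hLL : Ln * Ln ≤ Ln^(4:ℕ) := by
        have h1 : (1:ℝ) ≤ Ln * Ln := by
          have := mul_le_mul hLn1 hLn1 zero_le_one (by linarith : (0:ℝ) ≤ Ln)
          linarith
        calc Ln * Ln = 1 * (Ln * Ln) := (one_mul _).symm
          _ ≤ (Ln * Ln) * (Ln * Ln) := mul_le_mul_of_nonneg_right h1 (by positivity)
          _ = Ln^(4:ℕ) := by ring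
      have := mul_le_mul_of_nonneg_left hLL hε2.le
      calc ε^(2:ℕ) * Ln * Ln = ε^2 * (Ln * Ln) := by ring
        _ ≤ ε^2 * Ln^(4:ℕ) := this
        _ = ε^(2:ℕ) * Ln^(4:ℕ) := by norm_num
    calc 2 * ε^(4:ℕ) * Lm * (1+ε)^p ≤ 2 * ε^(2:ℕ) * Ln * P := step1
      _ ≤ ε^(2:ℕ) * Ln * Ln := step2
      _ ≤ ε^(2:ℕ) * Ln^(4:ℕ) := step3
      _ = ε^2 * Ln^(4:ℕ) := by norm_num
  have hcoef : 2 * E * Lm * (1+ε)^p / ε^2 ≤ 1 := by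
    rw [div_le_one hε2, hE4]
    calc 2 * (ε^(4:ℕ) / Ln^(4:ℕ)) * Lm * (1+ε)^p
        = 2 * ε^(4:ℕ) * Lm * (1+ε)^p / Ln^(4:ℕ) := by ring
      _ ≤ ε^2 * Ln^(4:ℕ) / Ln^(4:ℕ) := by
          apply div_le_div_of_nonneg_right ?_ ?_ <;> first
            | exact hkey
            | positivity
      _ = ε^2 := by field_simp
  -- assemble
  have hsplitpow : (ε/Ln)^(c+4) = D * E := Real.rpow_add hεLn c 4
  have hvp0 : (0:ℝ) ≤ v^p := (Real.rpow_pos_of_pos hv0 p).le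
  calc (ε/Ln)^(c+4) * R = E * (D * R) := by rw [hsplitpow]; ring
    _ ≤ E * (D * (T + Tl)) :=
        mul_le_mul_of_nonneg_left (mul_le_mul_of_nonneg_left hR_le hD0.le) hE0.le
    _ = E * (D * T + D * Tl) := by ring
    _ ≤ E * (1 * T + (k:ℝ) * A) :=
        mul_le_mul_of_nonneg_left
          (add_le_add (mul_le_mul_of_nonneg_right hD1 hT0) hDTl) hE0.le
    _ ≤ E * (T + T) := mul_le_mul_of_nonneg_left (by linarith) hE0.le
    _ = 2 * E * T := by ring
    _ ≤ 2 * E * (Lm / ε^2 * L) :=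
        mul_le_mul_of_nonneg_left hTL (by positivity)
    _ ≤ 2 * E * (Lm / ε^2 * (s * ((1+ε)*v)^p)) :=
        mul_le_mul_of_nonneg_left
          (mul_le_mul_of_nonneg_left hLs (le_of_lt (div_pos hLm0 hε2))) (by positivity)
    _ = (2 * E * Lm * (1+ε)^p / ε^2) * (v^p * s) := by
        rw [Real.mul_rpow (by linarith : (0:ℝ) ≤ 1+ε) hv0.le]; ring
    _ ≤ 1 * (v^p * s) :=
        mul_le_mul_of_nonneg_right hcoef (mul_nonneg hvp0 hs0)
    _ = v^p * s := one_mul _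
end
end

section
/- Let p > 2, ε ∈ (0,1] and k an integer with 1 ≤ k ≤ n, and suppose the level set S_j contributes (for the top-k problem, with exponent p). Write v = ζ(1+ε)^{t−j−1}. Then for every integer w ≥ 0, the number of indices i ∈ {1,…,k} with v/2^{w+1} ≤ |a_i| < v/2^w is at most 2^{2p} · (log m/ε²) · s_j · 2^{wp}. -/
open Finset

noncomputable section

/-- for `p > 2`, if `S_j` contributes for the top-`k` problem (exponent `p`), then
for every `w ≥ 0` the number of indices `i ∈ {1,…,k}` (paper 1-indexed) with
`v/2^{w+1} ≤ |a_i| < v/2^w` is at most `2^{2p} · (log m/ε²) · s_j · 2^{wp}`,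
where `v = ζ(1+ε)^{t-j-1}`. -/
theorem stmt_13 (n : ℕ) (hn : 2 ≤ n) (x a : Fin n → ℤ) (p ε m ζ : ℝ) (k j w : ℕ)
    (hp : 2 < p) (hε1 : 0 < ε) (hε2 : ε ≤ 1)
    (hk1 : 1 ≤ k) (hk2 : k ≤ n)
    (hra : IsRearrangement x a)
    (hxm : ∀ i, |(x i : ℝ)| ≤ m) (hm1 : 2 ≤ m) (hm2 : m ≤ (n : ℝ))
    (hζ1 : 1 / 2 ≤ ζ) (hζ2 : ζ ≤ 1)
    (hcon : ContributesTop x a p ε m ζ j k) :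
    ∀ v : ℝ, v = ζ * (1 + ε) ^ (tExp ε m - (j : ℝ) - 1) →
    ((Finset.univ.filter fun i : Fin n =>
        (i : ℕ) < k ∧ v / 2 ^ (w + 1) ≤ |(a i : ℝ)| ∧ |(a i : ℝ)| < v / 2 ^ w).card : ℝ) ≤
      2 ^ (2 * p) * (Real.log m / ε ^ 2) * ((levelSet x ε m ζ j).card : ℝ) *
        2 ^ ((w : ℝ) * p) := by
  intro v hv
  have hε0 : (0:ℝ) < 1 + ε := by linarith
  have hζ0 : (0:ℝ) < ζ := by linarith
  have hv0 : 0 < v := by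
    rw [hv]; exact mul_pos hζ0 (Real.rpow_pos_of_pos hε0 _)
  have hlogm : 0 < Real.log m := Real.log_pos (by linarith)
  have hp0 : 0 ≤ p := by linarith
  have hA0 : (0:ℝ) < v / 2 ^ (w+1) := by positivity
  have hAp : (0:ℝ) < (v / 2 ^ (w+1)) ^ p := Real.rpow_pos_of_pos hA0 p
  set T := Finset.univ.filter (fun i : Fin n =>
        (i : ℕ) < k ∧ v / 2 ^ (w + 1) ≤ |(a i : ℝ)| ∧ |(a i : ℝ)| < v / 2 ^ w) with hT
  set S := levelSet x ε m ζ j with hS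
  -- step 1
  have h1 : (T.card : ℝ) * (v / 2 ^ (w+1)) ^ p ≤ topSum a p k := by
    rw [topSum]
    calc (T.card : ℝ) * (v / 2 ^ (w+1)) ^ p
        = ∑ _i ∈ T, (v / 2 ^ (w+1)) ^ p := by rw [Finset.sum_const, nsmul_eq_mul]
      _ ≤ ∑ i ∈ T, |(a i : ℝ)| ^ p := by
          apply Finset.sum_le_sum
          intro i hi
          simp only [hT, Finset.mem_filter] at hi
          exact Real.rpow_le_rpow hA0.le hi.2.2.1 hp0
      _ ≤ ∑ i ∈ Finset.univ.filter (fun i : Fin n => (i:ℕ) < k), |(a i : ℝ)| ^ p := by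
          apply Finset.sum_le_sum_of_subset_of_nonneg
          · intro i hi
            simp only [hT, Finset.mem_filter] at hi ⊢
            exact ⟨hi.1, hi.2.1⟩
          · intro i _ _
            exact Real.rpow_nonneg (abs_nonneg _) p
  -- step 2
  have h2 : ∑ i ∈ S, |(x i : ℝ)| ^ p ≤ (S.card : ℝ) * (v * (1+ε)) ^ p := by
    calc ∑ i ∈ S, |(x i : ℝ)| ^ p ≤ ∑ _i ∈ S, (v * (1+ε)) ^ p := by
          apply Finset.sum_le_sum
          intro i hi
          simp only [hS, levelSet, Finset.mem_filter] at hi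
          have heq : ζ * (1+ε) ^ (tExp ε m - (j:ℝ)) = v * (1+ε) := by
            have h' : tExp ε m - (j:ℝ) = (tExp ε m - (j:ℝ) - 1) + 1 := by ring
            rw [h', Real.rpow_add hε0, Real.rpow_one, hv]; ring
          have hub : |(x i : ℝ)| ≤ v * (1+ε) := by
            rw [← heq]; exact hi.2.2.le
          exact Real.rpow_le_rpow (abs_nonneg _) hub hp0
      _ = (S.card : ℝ) * (v * (1+ε)) ^ p := by rw [Finset.sum_const, nsmul_eq_mul]
  -- step 3 : combine contribution
  have hc : ε ^ 2 / Real.log m * topSum a p k ≤ ∑ i ∈ S, |(x i : ℝ)| ^ p := hcon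
  have hcoef : (0:ℝ) < ε ^ 2 / Real.log m := by positivity
  have h3 : (T.card : ℝ) * (v / 2 ^ (w+1)) ^ p ≤
      Real.log m / ε ^ 2 * ((S.card : ℝ) * (v * (1+ε)) ^ p) := by
    have h4 : ε ^ 2 / Real.log m * ((T.card : ℝ) * (v / 2 ^ (w+1)) ^ p) ≤
        (S.card : ℝ) * (v * (1+ε)) ^ p :=
      le_trans (le_trans (mul_le_mul_of_nonneg_left h1 hcoef.le) hc) h2
    have := mul_le_mul_of_nonneg_left h4 (le_of_lt (by positivity : (0:ℝ) < Real.log m / ε ^ 2))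
    calc (T.card : ℝ) * (v / 2 ^ (w+1)) ^ p
        = Real.log m / ε ^ 2 * (ε ^ 2 / Real.log m * ((T.card : ℝ) * (v / 2 ^ (w+1)) ^ p)) := by
          field_simp
      _ ≤ Real.log m / ε ^ 2 * ((S.card : ℝ) * (v * (1+ε)) ^ p) := this
  -- step 4 : (v(1+ε))^p ≤ 2^{2p} 2^{wp} (v/2^{w+1})^p
  have h5 : (v * (1+ε)) ^ p ≤ 2 ^ (2 * p) * 2 ^ ((w:ℝ) * p) * (v / 2 ^ (w+1)) ^ p := by
    have e1 : (2:ℝ) ^ (2 * p) = ((2:ℝ) ^ (2:ℕ)) ^ p := by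
      rw [← Real.rpow_natCast (2:ℝ) 2, ← Real.rpow_mul (by norm_num)]
      norm_num
    have e2 : (2:ℝ) ^ ((w:ℝ) * p) = ((2:ℝ) ^ (w:ℕ)) ^ p := by
      rw [← Real.rpow_natCast (2:ℝ) w, ← Real.rpow_mul (by norm_num)]
    rw [e1, e2, ← Real.mul_rpow (by positivity) (by positivity),
        ← Real.mul_rpow (by positivity) (by positivity)]
    apply Real.rpow_le_rpow (by positivity) _ hp0
    have : (2:ℝ) ^ (2:ℕ) * (2:ℝ) ^ (w:ℕ) * (v / 2 ^ (w+1)) = 2 * v := by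
      rw [pow_succ]
      field_simp
      ring
    rw [this]
    nlinarith
  -- finish
  have h6 : (T.card : ℝ) * (v / 2 ^ (w+1)) ^ p ≤
      (2 ^ (2 * p) * (Real.log m / ε ^ 2) * ((S.card : ℝ)) * 2 ^ ((w:ℝ) * p)) *
        (v / 2 ^ (w+1)) ^ p := by
    calc (T.card : ℝ) * (v / 2 ^ (w+1)) ^ p
        ≤ Real.log m / ε ^ 2 * ((S.card : ℝ) * (v * (1+ε)) ^ p) := h3
      _ ≤ Real.log m / ε ^ 2 * ((S.card : ℝ) *
            (2 ^ (2 * p) * 2 ^ ((w:ℝ) * p) * (v / 2 ^ (w+1)) ^ p)) := by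
          apply mul_le_mul_of_nonneg_left _ (by positivity)
          exact mul_le_mul_of_nonneg_left h5 (Nat.cast_nonneg _)
      _ = (2 ^ (2 * p) * (Real.log m / ε ^ 2) * ((S.card : ℝ)) * 2 ^ ((w:ℝ) * p)) *
            (v / 2 ^ (w+1)) ^ p := by ring
  exact le_of_mul_le_mul_right h6 hAp
end
end

section
/- For every real p > 2 there is a constant C_p (depending only on p) such that the following holds. Let ε ∈ (0,1] and k an integer with 1 ≤ k ≤ n, suppose the level set S_j contributes (for the top-k problem, with exponent p), write v = ζ(1+ε)^{t−j−1}, and assume rank(v) ≤ k. Then Σ_{i=rank(v)+1}^{k} |a_i|^p ≤ C_p · v^p · s_j · (log² m)/ε²; equivalently, ‖x_{-k}‖_p^p ≥ ‖x_{-rank(v)}‖_p^p − C_p · v^p · s_j · (log² m)/ε². -/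
open Finset

noncomputable section

/-- for every `p > 2` there is a constant `C_p` such that if `S_j` contributes for
the top-`k` problem (exponent `p`), `v = ζ(1+ε)^{t-j-1}` and `rank(v) ≤ k`, then
`Σ_{i=rank(v)+1}^{k} |a_i|^p ≤ C_p · v^p · s_j · log²m/ε²`; equivalently
`‖x_{-k}‖_p^p ≥ ‖x_{-rank(v)}‖_p^p − C_p · v^p · s_j · log²m/ε²`. -/
theorem stmt_14 : ∀ p : ℝ, 2 < p → ∃ C : ℝ, 0 < C ∧ ∀ (n : ℕ), 2 ≤ n →
    ∀ (x a : Fin n → ℤ) (ε m ζ : ℝ) (k j : ℕ),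
    0 < ε → ε ≤ 1 → 1 ≤ k → k ≤ n →
    IsRearrangement x a →
    (∀ i, |(x i : ℝ)| ≤ m) → 2 ≤ m → m ≤ (n : ℝ) →
    1 / 2 ≤ ζ → ζ ≤ 1 →
    ContributesTop x a p ε m ζ j k →
    ∀ v : ℝ, v = ζ * (1 + ε) ^ (tExp ε m - (j : ℝ) - 1) →
    rankOf x v ≤ k →
    (∑ i ∈ Finset.univ.filter (fun i : Fin n => rankOf x v ≤ (i : ℕ) ∧ (i : ℕ) < k),
        |(a i : ℝ)| ^ p) ≤
      C * v ^ p * ((levelSet x ε m ζ j).card : ℝ) * Real.log m ^ 2 / ε ^ 2 ∧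
    tailSum a p (rankOf x v) -
        C * v ^ p * ((levelSet x ε m ζ j).card : ℝ) * Real.log m ^ 2 / ε ^ 2 ≤
      tailSum a p k := by
  intro p hp
  refine ⟨2 * 2 ^ p, by positivity, ?_⟩
  intro n hn x a ε m ζ k j hε hε1 hk1 hkn hre hxm hm2 hmn hζ1 hζ2 hcontrib v hv hrank
  have hp0 : (0:ℝ) < p := by linarith
  have hζ0 : (0:ℝ) < ζ := by linarith
  have h1ε : (0:ℝ) < 1 + ε := by linarith
  have hε2 : (0:ℝ) < ε ^ 2 := by positivity
  have hL2 : (0:ℝ) < Real.log 2 := Real.log_pos (by norm_num)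
  have hLlog : Real.log 2 ≤ Real.log m := by
    apply Real.log_le_log (by norm_num) hm2
  have hLpos : (0:ℝ) < Real.log m := lt_of_lt_of_le hL2 hLlog
  have hL12 : (1/2:ℝ) ≤ Real.log m := by
    have := Real.log_two_gt_d9
    linarith
  have hv0 : (0:ℝ) < v := by rw [hv]; positivity
  set r := rankOf x v with hr
  set S := levelSet x ε m ζ j with hS
  -- bound on elements of the level set
  have hbound : ∀ i ∈ S, |(x i : ℝ)| ^ p ≤ 2 ^ p * v ^ p := by
    intro i hi
    rw [hS, levelSet, Finset.mem_filter] at hi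
    have h2 : |(x i:ℝ)| < ζ * (1+ε) ^ (tExp ε m - (j:ℝ)) := hi.2.2
    have heq : ζ * (1+ε) ^ (tExp ε m - (j:ℝ)) = v * (1+ε) := by
      rw [hv, show tExp ε m - (j:ℝ) = (tExp ε m - (j:ℝ) - 1) + 1 by ring,
          Real.rpow_add h1ε, Real.rpow_one]
      ring
    have h3 : |(x i:ℝ)| ≤ 2 * v := by
      rw [heq] at h2
      nlinarith
    calc |(x i:ℝ)| ^ p ≤ (2*v) ^ p := Real.rpow_le_rpow (abs_nonneg _) h3 hp0.le
    _ = 2 ^ p * v ^ p := Real.mul_rpow (by norm_num) hv0.le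
  have hSsum : ∑ i ∈ S, |(x i:ℝ)| ^ p ≤ (S.card : ℝ) * (2 ^ p * v ^ p) := by
    have := Finset.sum_le_card_nsmul S (fun i => |(x i:ℝ)| ^ p) (2 ^ p * v ^ p) hbound
    simpa [nsmul_eq_mul] using this
  set T := ∑ i ∈ Finset.univ.filter (fun i : Fin n => r ≤ (i:ℕ) ∧ (i:ℕ) < k),
      |(a i:ℝ)| ^ p with hT
  have hTtop : T ≤ topSum a p k := by
    apply Finset.sum_le_sum_of_subset_of_nonneg
    · intro i hi
      simp only [Finset.mem_filter, Finset.mem_univ, true_and] at *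
      exact hi.2
    · intro i _ _
      positivity
  have hct : ε ^ 2 / Real.log m * topSum a p k ≤ ∑ i ∈ S, |(x i:ℝ)| ^ p := hcontrib
  have hf2 : ε ^ 2 * topSum a p k ≤ Real.log m * (∑ i ∈ S, |(x i:ℝ)| ^ p) := by
    have := mul_le_mul_of_nonneg_left hct hLpos.le
    rw [mul_comm (Real.log m) (ε ^ 2 / Real.log m * topSum a p k)] at this
    calc ε ^ 2 * topSum a p k = ε ^ 2 / Real.log m * topSum a p k * Real.log m := by
          field_simp
    _ ≤ _ := this
  have hX0 : 0 ≤ topSum a p k := by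
    apply Finset.sum_nonneg
    intro i _
    positivity
  have hY0 : 0 ≤ ∑ i ∈ S, |(x i:ℝ)| ^ p := by
    apply Finset.sum_nonneg
    intro i _
    positivity
  have hA0 : (0:ℝ) ≤ 2 ^ p := by positivity
  have hV0 : (0:ℝ) ≤ v ^ p := by positivity
  have hs0 : (0:ℝ) ≤ (S.card : ℝ) := by positivity
  have goal1 : T ≤ 2 * 2 ^ p * v ^ p * (S.card : ℝ) * Real.log m ^ 2 / ε ^ 2 := by
    rw [le_div_iff₀ hε2]
    have h4 : Real.log m * ((S.card : ℝ) * (2 ^ p * v ^ p)) ≤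
        2 * 2 ^ p * v ^ p * (S.card : ℝ) * Real.log m ^ 2 := by
      nlinarith [mul_nonneg (mul_nonneg (by linarith : (0:ℝ) ≤ 2 * Real.log m - 1) hLpos.le)
        (mul_nonneg (mul_nonneg hA0 hV0) hs0)]
    have h5 := mul_le_mul_of_nonneg_left hSsum hLpos.le
    nlinarith [mul_le_mul_of_nonneg_right hTtop hε2.le]
  refine ⟨goal1, ?_⟩
  have hdisj : Disjoint (Finset.univ.filter fun i : Fin n => r ≤ (i:ℕ) ∧ (i:ℕ) < k)
      (Finset.univ.filter fun i : Fin n => k ≤ (i:ℕ)) := by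
    rw [Finset.disjoint_left]
    intro i hi hi'
    simp only [Finset.mem_filter, Finset.mem_univ, true_and] at hi hi'
    omega
  have hunion : (Finset.univ.filter fun i : Fin n => r ≤ (i:ℕ)) =
      (Finset.univ.filter fun i : Fin n => r ≤ (i:ℕ) ∧ (i:ℕ) < k) ∪
      (Finset.univ.filter fun i : Fin n => k ≤ (i:ℕ)) := by
    ext i
    simp only [Finset.mem_union, Finset.mem_filter, Finset.mem_univ, true_and]
    omega
  have hsplit : tailSum a p r = T + tailSum a p k := by
    rw [tailSum, tailSum, hT, hunion, Finset.sum_union hdisj]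
  linarith
end
end

section
/- Let p > 2, ε ∈ (0,1] and k an integer with 1 ≤ k ≤ n/2. If the level set S_j contributes (for the trimmed-k problem, with exponent p), then, writing v = ζ(1+ε)^{t−j}, one has v^p · s_j ≥ (ε²/log m) · (n−k) · |a_{n−k}|^p ≥ (ε²/log m) · ‖x_{-(n−k)}‖_p^p. -/
open Finset

noncomputable section

lemma card_filter_fin_ico (n a b : ℕ) (hb : b ≤ n) :
    (Finset.univ.filter fun i : Fin n => a ≤ (i : ℕ) ∧ (i : ℕ) < b).card = b - a := by
  rw [Finset.card_filter,
    Fin.sum_univ_eq_sum_range (fun i => if a ≤ i ∧ i < b then 1 else 0), ← Finset.card_filter]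
  have h : (Finset.range n).filter (fun i => a ≤ i ∧ i < b) = Finset.Ico a b := by
    ext i
    simp only [Finset.mem_filter, Finset.mem_range, Finset.mem_Ico]
    omega
  rw [h, Nat.card_Ico]

/-- for `p > 2`, if `S_j` contributes for the trimmed-`k` problem (exponent `p`)
and `v = ζ(1+ε)^{t-j}`, then
`v^p · s_j ≥ (ε²/log m) · (n−k) · |a_{n−k}|^p ≥ (ε²/log m) · ‖x_{-(n−k)}‖_p^p`. -/
theorem stmt_15 (n : ℕ) (hn : 2 ≤ n) (x a : Fin n → ℤ) (p ε m ζ : ℝ) (k j : ℕ)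
    (hp : 2 < p) (hε1 : 0 < ε) (hε2 : ε ≤ 1)
    (hk1 : 1 ≤ k) (hk2 : 2 * k ≤ n)
    (hra : IsRearrangement x a)
    (hxm : ∀ i, |(x i : ℝ)| ≤ m) (hm1 : 2 ≤ m) (hm2 : m ≤ (n : ℝ))
    (hζ1 : 1 / 2 ≤ ζ) (hζ2 : ζ ≤ 1)
    (hcon : ContributesTrim x a p ε m ζ j k) :
    ∀ v : ℝ, v = ζ * (1 + ε) ^ (tExp ε m - (j : ℝ)) →
    ε ^ 2 / Real.log m * ((n - k : ℕ) : ℝ) * aAbs a (n - k) ^ p ≤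
        v ^ p * ((levelSet x ε m ζ j).card : ℝ) ∧
      ε ^ 2 / Real.log m * tailSum a p (n - k) ≤
        ε ^ 2 / Real.log m * ((n - k : ℕ) : ℝ) * aAbs a (n - k) ^ p := by
  intro v hv
  obtain ⟨-, hmono⟩ := hra
  have hlog : 0 < Real.log m := Real.log_pos (by linarith)
  have hc : 0 ≤ ε ^ 2 / Real.log m := by positivity
  have hp0 : 0 ≤ p := by linarith
  have hnk1 : n - k - 1 < n := by omega
  have hk1n : k - 1 < n := by omega
  have hank : aAbs a (n - k) = |(a ⟨n - k - 1, hnk1⟩ : ℝ)| := by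
    simp [aAbs, hnk1]
  have hakk : aAbs a k = |(a ⟨k - 1, hk1n⟩ : ℝ)| := by
    simp [aAbs, hk1n]
  have hBnn : (0 : ℝ) ≤ aAbs a (n - k) := by rw [hank]; positivity
  have hBp : (0 : ℝ) ≤ aAbs a (n - k) ^ p := Real.rpow_nonneg hBnn p
  -- monotonicity helper
  have habs : ∀ i i' : Fin n, i ≤ i' → |(a i' : ℝ)| ≤ |(a i : ℝ)| := by
    intro i i' h
    rw [← Int.cast_abs, ← Int.cast_abs]
    exact_mod_cast hmono i i' h
  -- second inequality
  have hcard_tail : (Finset.univ.filter fun i : Fin n => n - k ≤ (i : ℕ)).card = k := by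
    have h1 : (Finset.univ.filter fun i : Fin n => n - k ≤ (i : ℕ)) =
        Finset.univ.filter fun i : Fin n => n - k ≤ (i : ℕ) ∧ (i : ℕ) < n := by
      apply Finset.filter_congr
      intro i _
      simp [i.isLt]
    rw [h1, card_filter_fin_ico n (n - k) n le_rfl]
    omega
  have htail : tailSum a p (n - k) ≤ ((n - k : ℕ) : ℝ) * aAbs a (n - k) ^ p := by
    unfold tailSum
    have hle : ∀ i ∈ Finset.univ.filter fun i : Fin n => n - k ≤ (i : ℕ),
        |(a i : ℝ)| ^ p ≤ aAbs a (n - k) ^ p := by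
      intro i hi
      simp only [Finset.mem_filter] at hi
      rw [hank]
      refine Real.rpow_le_rpow (abs_nonneg _) ?_ hp0
      rw [← hank]
      rw [hank]
      exact habs ⟨n - k - 1, hnk1⟩ i (by simp [Fin.le_def]; omega)
    calc (∑ i ∈ Finset.univ.filter fun i : Fin n => n - k ≤ (i : ℕ), |(a i : ℝ)| ^ p)
        ≤ (Finset.univ.filter fun i : Fin n => n - k ≤ (i : ℕ)).card • (aAbs a (n - k) ^ p) :=
          Finset.sum_le_card_nsmul _ _ _ hle
      _ = (k : ℝ) * aAbs a (n - k) ^ p := by rw [hcard_tail, nsmul_eq_mul]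
      _ ≤ ((n - k : ℕ) : ℝ) * aAbs a (n - k) ^ p := by
          apply mul_le_mul_of_nonneg_right _ hBp
          exact_mod_cast Nat.le_sub_of_add_le (by omega)
  refine ⟨?_, ?_⟩
  · -- first inequality
    have hvpos : 0 < v := by
      rw [hv]; positivity
    -- sum over level set ≤ v^p * card
    have hsum : (∑ i ∈ levelSet x ε m ζ j, |(x i : ℝ)| ^ p) ≤
        v ^ p * ((levelSet x ε m ζ j).card : ℝ) := by
      have hle : ∀ i ∈ levelSet x ε m ζ j, |(x i : ℝ)| ^ p ≤ v ^ p := by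
        intro i hi
        simp only [levelSet, Finset.mem_filter] at hi
        exact Real.rpow_le_rpow (abs_nonneg _) (le_of_lt (hv ▸ hi.2.2)) hp0
      calc (∑ i ∈ levelSet x ε m ζ j, |(x i : ℝ)| ^ p)
          ≤ (levelSet x ε m ζ j).card • (v ^ p) := Finset.sum_le_card_nsmul _ _ _ hle
        _ = v ^ p * ((levelSet x ε m ζ j).card : ℝ) := by rw [nsmul_eq_mul]; ring
    -- midSum lower bound
    have hmid : ((n - 2 * k : ℕ) : ℝ) * aAbs a (n - k) ^ p ≤ midSum a p k := by
      unfold midSum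
      have hle : ∀ i ∈ Finset.univ.filter fun i : Fin n => k ≤ (i : ℕ) ∧ (i : ℕ) < n - k,
          aAbs a (n - k) ^ p ≤ |(a i : ℝ)| ^ p := by
        intro i hi
        simp only [Finset.mem_filter] at hi
        rw [hank]
        exact Real.rpow_le_rpow (abs_nonneg _)
          (habs i ⟨n - k - 1, hnk1⟩ (by simp [Fin.le_def]; omega)) hp0
      have hcardm : (Finset.univ.filter fun i : Fin n =>
          k ≤ (i : ℕ) ∧ (i : ℕ) < n - k).card = n - 2 * k := by
        rw [card_filter_fin_ico n k (n - k) (by omega)]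
        omega
      calc ((n - 2 * k : ℕ) : ℝ) * aAbs a (n - k) ^ p
          = (Finset.univ.filter fun i : Fin n =>
              k ≤ (i : ℕ) ∧ (i : ℕ) < n - k).card • (aAbs a (n - k) ^ p) := by
            rw [hcardm, nsmul_eq_mul]
        _ ≤ _ := Finset.card_nsmul_le_sum _ _ _ hle
    -- k * aAbs a k ^ p lower bound
    have hka : (k : ℝ) * aAbs a (n - k) ^ p ≤ (k : ℝ) * aAbs a k ^ p := by
      apply mul_le_mul_of_nonneg_left _ (Nat.cast_nonneg k)
      rw [hank, hakk]
      exact Real.rpow_le_rpow (abs_nonneg _)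
        (habs ⟨k - 1, hk1n⟩ ⟨n - k - 1, hnk1⟩ (by simp [Fin.le_def]; omega)) hp0
    have hcast : ((n - k : ℕ) : ℝ) = ((n - 2 * k : ℕ) : ℝ) + (k : ℝ) := by
      have : (n - k : ℕ) = (n - 2 * k) + k := by omega
      rw [this]; push_cast; ring
    have hkey : ((n - k : ℕ) : ℝ) * aAbs a (n - k) ^ p ≤
        midSum a p k + (k : ℝ) * aAbs a k ^ p := by
      rw [hcast, add_mul]
      exact add_le_add hmid hka
    calc ε ^ 2 / Real.log m * ((n - k : ℕ) : ℝ) * aAbs a (n - k) ^ p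
        = ε ^ 2 / Real.log m * (((n - k : ℕ) : ℝ) * aAbs a (n - k) ^ p) := by ring
      _ ≤ ε ^ 2 / Real.log m * (midSum a p k + (k : ℝ) * aAbs a k ^ p) :=
          mul_le_mul_of_nonneg_left hkey hc
      _ ≤ ∑ i ∈ levelSet x ε m ζ j, |(x i : ℝ)| ^ p := hcon
      _ ≤ v ^ p * ((levelSet x ε m ζ j).card : ℝ) := hsum
  · calc ε ^ 2 / Real.log m * tailSum a p (n - k)
        ≤ ε ^ 2 / Real.log m * (((n - k : ℕ) : ℝ) * aAbs a (n - k) ^ p) :=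
          mul_le_mul_of_nonneg_left htail hc
      _ = ε ^ 2 / Real.log m * ((n - k : ℕ) : ℝ) * aAbs a (n - k) ^ p := by ring
end
end
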